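/- arXiv:2509.16755 — 6 statements merged into one kernel-verified Lean document; each statement's English description precedes it below -/
import Mathlib

section
/- Let κ be a singular cardinal of cofinality ω, let (f_α)_{α<μ} be a scale in ∏_n κ_n with μ > κ⁺ regular, and let β < μ with cf(β) = κ⁺. Suppose that for unboundedly many regular cardinals η < κ, the set of good points below β of cofinality η is stationary in β. Then there is an exact upper bound h for (f_α)_{α<β} such that cf(h(n)) → κ, i.e. {n : cf(h(n)) < η} is finite for every η < κ. -/
open Cardinal Set

universe u v

noncomputable section

/-- Eventual domination: `f n < g n` for all but finitely many `n`. -/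
def EvLT (f g : ℕ → Ordinal.{u}) : Prop := {n | ¬ f n < g n}.Finite

/-- `C` is a club (closed and unbounded) subset of the ordinal `α`: every member of `C`
is below `α`, `C` is unbounded in `α`, and `C` is closed under suprema of its nonempty
subsets whose supremum is below `α`. -/
def IsClubIn (C : Set Ordinal.{u}) (α : Ordinal.{u}) : Prop :=
  (∀ β ∈ C, β < α) ∧ (∀ β < α, ∃ γ ∈ C, β ≤ γ) ∧
    (∀ Y ⊆ C, Y.Nonempty → sSup Y < α → sSup Y ∈ C)

/-- The set of limit points of a set `C` of ordinals: those `β > 0` with `sup (C ∩ β) = β`. -/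
def limPts (C : Set Ordinal.{u}) : Set Ordinal.{u} :=
  {β | 0 < β ∧ sSup (C ∩ Set.Iio β) = β}

/-- `f` (restricted to the ordinals below `μ`) is a scale of length `μ` in `∏ n, κn n`:
pointwise below the `κn n`, increasing and cofinal under eventual domination. -/
def IsScale (κn : ℕ → Cardinal.{u}) (μ : Ordinal.{u}) (f : Ordinal.{u} → ℕ → Ordinal.{u}) :
    Prop :=
  (∀ α < μ, ∀ n, f α n < (κn n).ord) ∧
  (∀ α β, α < β → β < μ → EvLT (f α) (f β)) ∧
  (∀ h : ℕ → Ordinal.{u}, (∀ n, h n < (κn n).ord) → ∃ α < μ, EvLT h (f α))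

/-- `f` (restricted to the ordinals below `μ`) is a weak scale of length `μ` in `∏ n, lam n`:
functions `ω → κ` which are `<*`-increasing, eventually below the `lam n`, and cofinal in
`∏ n, lam n` under eventual domination. -/
def IsWeakScale (κ : Cardinal.{u}) (lam : ℕ → Ordinal.{u}) (μ : Ordinal.{u})
    (f : Ordinal.{u} → ℕ → Ordinal.{u}) : Prop :=
  (∀ α < μ, ∀ n, f α n < κ.ord) ∧
  (∀ α β, α < β → β < μ → EvLT (f α) (f β)) ∧
  (∀ α < μ, {n | ¬ f α n < lam n}.Finite) ∧
  (∀ h : ℕ → Ordinal.{u}, (∀ n, h n < lam n) → ∃ α < μ, EvLT h (f α))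

/-- The (weak) scale `f` of length `μ` is disjointing: for every `β < μ` there are natural
numbers `N α` for `α < β` such that `f α n < f α' n` whenever `α < α' < β` and
`n ≥ max (N α) (N α')`. -/
def IsDisjointing (μ : Ordinal.{u}) (f : Ordinal.{u} → ℕ → Ordinal.{u}) : Prop :=
  ∀ β < μ, ∃ N : Ordinal.{u} → ℕ,
    ∀ α α', α < α' → α' < β → ∀ n, N α ≤ n → N α' ≤ n → f α n < f α' n

/-- `β` is a good point of the sequence `f`: there are an unbounded `A ⊆ β` and `m < ω`
such that `ξ ↦ f ξ n` is strictly increasing on `A` for all `n ≥ m`. -/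
def IsGoodPt (f : Ordinal.{u} → ℕ → Ordinal.{v}) (β : Ordinal.{u}) : Prop :=
  ∃ A : Set Ordinal.{u}, (∀ ξ ∈ A, ξ < β) ∧ (∀ γ < β, ∃ ξ ∈ A, γ ≤ ξ) ∧
    ∃ m : ℕ, ∀ n, m ≤ n → StrictMonoOn (fun ξ => f ξ n) A

/-- `β` is a better point of the sequence `f`: there is a club `C ⊆ β` such that for every
limit point `γ` of `C` there is `m < ω` with `f ξ n < f γ n` for all `ξ ∈ C ∩ γ`, `n ≥ m`. -/
def IsBetterPt (f : Ordinal.{u} → ℕ → Ordinal.{v}) (β : Ordinal.{u}) : Prop :=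
  ∃ C : Set Ordinal.{u}, IsClubIn C β ∧
    ∀ γ ∈ limPts C, ∃ m : ℕ, ∀ ξ ∈ C ∩ Set.Iio γ, ∀ n, m ≤ n → f ξ n < f γ n

/-- `β` is a very good point of the sequence `f`: there are a club `C ⊆ β` and `m < ω`
such that `ξ ↦ f ξ n` is strictly increasing on `C` for all `n ≥ m`. -/
def IsVeryGoodPt (f : Ordinal.{u} → ℕ → Ordinal.{v}) (β : Ordinal.{u}) : Prop :=
  ∃ C : Set Ordinal.{u}, IsClubIn C β ∧
    ∃ m : ℕ, ∀ n, m ≤ n → StrictMonoOn (fun ξ => f ξ n) C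

/-- `h` is an exact upper bound for the restriction of `f` to the ordinals below `β`:
`f α <* h` for all `α < β`, and every `g <* h` satisfies `g <* f α` for some `α < β`. -/
def IsEub (f : Ordinal.{u} → ℕ → Ordinal.{u}) (β : Ordinal.{u}) (h : ℕ → Ordinal.{u}) :
    Prop :=
  (∀ α < β, EvLT (f α) h) ∧
  ∀ g : ℕ → Ordinal.{u}, EvLT g h → ∃ α < β, EvLT g (f α)

namespace EubAux
open Ordinal
open scoped Classical

lemma no_desc (z : ℕ → Ordinal.{u}) (hz : ∀ k, z (k + 1) < z k) : False :=
  (RelEmbedding.natGT z hz).not_wellFounded Ordinal.lt_wf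

lemma finite_of_strictAnti {S : Set Ordinal.{u}} (v : Ordinal.{u} → Ordinal.{u})
    (hv : ∀ a ∈ S, ∀ b ∈ S, a < b → v b < v a) : S.Finite := by
  by_contra hinf
  have hinf : S.Infinite := hinf
  -- enumerate the first ω elements of S
  let T : ℕ → Set Ordinal.{u} := fun k => Nat.rec S (fun _ t => t \ {sInf t}) k
  have hTsucc : ∀ k, T (k + 1) = T k \ {sInf (T k)} := fun k => rfl
  have hTinf : ∀ k, (T k).Infinite := by
    intro k; induction k with
    | zero => exact hinf
    | succ k ih => rw [hTsucc]; exact ih.diff (Set.finite_singleton _)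
  have hTS : ∀ k, T k ⊆ S := by
    intro k; induction k with
    | zero => exact subset_rfl
    | succ k ih => rw [hTsucc]; exact (Set.diff_subset).trans ih
  set z : ℕ → Ordinal.{u} := fun k => sInf (T k) with hzdef
  have hzmem : ∀ k, z k ∈ T k := fun k => csInf_mem (hTinf k).nonempty
  have hzlt : ∀ k, z k < z (k + 1) := by
    intro k
    have h1 : z k ≤ z (k + 1) := by
      apply csInf_le_csInf (OrderBot.bddBelow _) (hTinf (k+1)).nonempty
      rw [hTsucc]; exact Set.diff_subset
    have h2 : z (k + 1) ≠ z k := by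
      have := hzmem (k + 1); rw [hTsucc] at this; exact this.2
    exact h1.lt_of_ne (Ne.symm h2)
  exact no_desc (fun k => v (z k))
    (fun k => hv (z k) (hTS k (hzmem k)) (z (k+1)) (hTS (k+1) (hzmem (k+1))) (hzlt k))

lemma sSup_lt_ord_of_range {ι : Type u} {g : ι → Ordinal.{u}} {S : Set Ordinal.{u}}
    {o : Ordinal.{u}} (hcard : #ι < o.cof) (hsub : S ⊆ Set.range g ∪ {0})
    (hbd : ∀ x ∈ S, x < o) (h0 : 0 < o) : sSup S < o := by
  rcases S.eq_empty_or_nonempty with rfl | hne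
  · simpa using h0
  classical
  set g' : ι → Ordinal.{u} := fun i => if g i ∈ S then g i else 0 with hg'
  have hbd' : BddAbove (Set.range g') := Ordinal.bddAbove_range _
  have h1 : sSup S ≤ iSup g' := by
    apply csSup_le hne
    intro x hx
    rcases hsub hx with ⟨i, rfl⟩ | hx0
    · have : g' i = g i := if_pos hx
      calc g i = g' i := this.symm
      _ ≤ _ := le_ciSup hbd' i
    · simp only [Set.mem_singleton_iff] at hx0; subst hx0; exact zero_le
  refine h1.trans_lt (Ordinal.iSup_lt_ord hcard fun i => ?_)
  by_cases h : g i ∈ S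
  · simpa [h] using hbd _ h
  · simpa [hg', h] using h0

lemma sSup_image_Iio_lt {i o : Ordinal.{u}} {g : Ordinal.{u} → Ordinal.{u}}
    (hcard : i.card < o.cof) (hg : ∀ j < i, g j < o) (h0 : 0 < o) :
    sSup (g '' Set.Iio i) < o := by
  refine sSup_lt_ord_of_range (ι := i.ToType)
    (g := fun x => g (((Ordinal.ToType.mk (o := i))).symm x).1) ?_ ?_ ?_ h0
  · rwa [Cardinal.mk_toType]
  · rintro x ⟨j, hj, rfl⟩
    exact Or.inl ⟨(Ordinal.ToType.mk (o := i)) ⟨j, hj⟩, by simp⟩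
  · rintro x ⟨j, hj, rfl⟩; exact hg j hj

lemma bddAbove_image_of_lt {A : Set Ordinal.{u}} {γ : Ordinal.{u}} (hA : ∀ x ∈ A, x < γ)
    (g : Ordinal.{u} → Ordinal.{u}) : BddAbove (g '' A) := by
  have h1 : Small.{u} A := small_subset (show A ⊆ Set.Iio γ from fun x hx => hA x hx)
  have h2 : Small.{u} (g '' A) := @small_image _ _ g A h1
  exact @Ordinal.bddAbove_of_small _ h2

lemma iSup_nat_lt {o : Ordinal.{u}} (hcof : ℵ₀ < o.cof) (z : ℕ → Ordinal.{u})
    (hz : ∀ k, z k < o) : (⨆ k : ULift.{u} ℕ, z k.down) < o := by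
  exact Ordinal.iSup_lt_ord (by rwa [Cardinal.mk_denumerable]) (fun i => hz i.down)

lemma exists_above_iSup_nat {o : Ordinal.{u}} (hcof : ℵ₀ < o.cof) (z : ℕ → Ordinal.{u})
    (hz : ∀ k, z k < o) : ∃ x < o, ∀ k, z k < x := by
  have hlim : Order.IsSuccLimit o := Ordinal.aleph0_le_cof.mp hcof.le
  refine ⟨(⨆ k : ULift.{u} ℕ, z k.down) + 1, hlim.succ_lt (iSup_nat_lt hcof z hz), fun k => ?_⟩
  have : z k ≤ ⨆ k : ULift.{u} ℕ, z k.down := le_ciSup (Ordinal.bddAbove_range _) (ULift.up k)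
  exact this.trans_lt (lt_add_one _)


lemma mono_stab {δ : Ordinal.{u}} {J : Set Ordinal.{u}} (hJ : ∀ x ∈ J, x < δ)
    (hJu : ∀ x < δ, ∃ y ∈ J, x ≤ y) (v : Ordinal.{u} → Ordinal.{u})
    (hm : ∀ i ∈ J, ∀ j ∈ J, i ≤ j → v i ≤ v j)
    {ι : Type u} (gi : ι → Ordinal.{u}) (hv : ∀ i ∈ J, v i ∈ Set.range gi)
    (hcard : #ι < δ.cof) (hδ : ℵ₀ ≤ δ.cof) :
    ∃ b ∈ J, ∀ i ∈ J, b ≤ i → v i = v b := by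
  classical
  have hδ0 : 0 < δ := (Ordinal.aleph0_le_cof.mp hδ).pos
  obtain ⟨j₀, hj₀J, -⟩ := hJu 0 hδ0
  set w : ι → Ordinal.{u} := fun x => if h : ∃ i ∈ J, gi x < v i then h.choose else j₀ with hw
  have hwJ : ∀ x, w x ∈ J ∧ (∀ h : ∃ i ∈ J, gi x < v i, gi x < v (w x)) := by
    intro x
    by_cases h : ∃ i ∈ J, gi x < v i
    · have := h.choose_spec
      constructor
      · rw [hw]; simp only [dif_pos h]; exact this.1
      · intro _; rw [hw]; simp only [dif_pos h]; exact this.2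
    · constructor
      · rw [hw]; simp only [dif_neg h]; exact hj₀J
      · intro h'; exact absurd h' h
  have hsup : (⨆ x, w x) < δ := by
    rcases isEmpty_or_nonempty ι with hι | hι
    · simp [ciSup_of_empty]; exact hδ0
    · exact Ordinal.iSup_lt_ord hcard (fun x => hJ _ (hwJ x).1)
  obtain ⟨b, hbJ, hble⟩ := hJu _ hsup
  refine ⟨b, hbJ, fun i hi hbi => ?_⟩
  have h1 : v b ≤ v i := hm b hbJ i hi hbi
  rcases h1.lt_or_eq with h2 | h2
  · exfalso
    obtain ⟨x, hx⟩ := hv b hbJ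
    have hex : ∃ i' ∈ J, gi x < v i' := ⟨i, hi, by rw [hx]; exact h2⟩
    have h3 : gi x < v (w x) := (hwJ x).2 hex
    have h4 : w x ≤ b := (le_ciSup (Ordinal.bddAbove_range _) x).trans hble
    have h5 : v (w x) ≤ v b := hm _ (hwJ x).1 b hbJ h4
    rw [hx] at h3; exact absurd (h3.trans_le h5) (lt_irrefl _)
  · exact h2.symm

lemma pigeon_unbounded {Λ : Ordinal.{u}} (hcof : ℵ₀ < Λ.cof) {A : Type} [Countable A]
    (E : Ordinal.{u} → A) : ∃ a : A, ∀ x < Λ, ∃ d, x ≤ d ∧ d < Λ ∧ E d = a := by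
  by_contra hcon
  push_neg at hcon
  choose bx hbx1 hbx2 using hcon
  have hne : Nonempty A := ⟨E 0⟩
  obtain ⟨fn, hfn⟩ := exists_surjective_nat A
  have hsup : (⨆ k : ULift.{u} ℕ, bx (fn k.down)) < Λ :=
    iSup_nat_lt hcof _ (fun k => hbx1 (fn k))
  set d := ⨆ k : ULift.{u} ℕ, bx (fn k.down) with hd
  obtain ⟨k, hk⟩ := hfn (E d)
  have h1 : bx (E d) ≤ d := by rw [← hk, hd]; exact le_ciSup (Ordinal.bddAbove_range _) (ULift.up k)
  exact hbx2 (E d) d h1 hsup rfl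

lemma exists_s {β : Ordinal.{u}} {lam : Cardinal.{u}} (hreg : lam.IsRegular)
    (hβ : β.cof = lam) :
    ∃ s : Ordinal.{u} → Ordinal.{u},
      (∀ i j, i < j → s i < s j) ∧
      (∀ i < lam.ord, s i < β) ∧
      (∀ x < β, ∃ i < lam.ord, x ≤ s i) ∧
      (∀ i, (∀ x < i, ∃ y, x < y ∧ y < i) → ∀ x < s i, ∃ j < i, x ≤ s j) := by
  classical
  have hβlim : Order.IsSuccLimit β := Ordinal.aleph0_le_cof.mp (by rw [hβ]; exact hreg.1)
  obtain ⟨F₀, hF₀⟩ := Ordinal.exists_fundamental_sequence β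
  set Λ := lam.ord with hΛ
  have hcofΛ : β.cof.ord = Λ := by rw [hβ]
  set s0 : Ordinal.{u} → Ordinal.{u} :=
    fun j => if h : j < β.cof.ord then F₀ j h else 0 with hs0
  have hs0lt : ∀ j < Λ, s0 j < β := by
    intro j hj
    rw [← hcofΛ] at hj; simp only [hs0, dif_pos hj]
    have := Ordinal.lt_blsub F₀ j hj
    rwa [hF₀.blsub_eq] at this
  have hs0cof : ∀ x < β, ∃ j < Λ, x ≤ s0 j := by
    intro x hx
    have : x < Ordinal.blsub β.cof.ord F₀ := by rwa [hF₀.blsub_eq]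
    obtain ⟨j, hj, hle⟩ := Ordinal.lt_blsub_iff.mp this
    exact ⟨j, by rwa [← hcofΛ], by simp only [hs0, dif_pos hj]; exact hle⟩
  set s : Ordinal.{u} → Ordinal.{u} := Ordinal.lt_wf.fix
    (fun i rec => max (sSup {x | ∃ j, ∃ h : j < i, x = rec j h + 1})
      (sSup {x | ∃ j, j + 1 = i ∧ x = s0 j + 1})) with hs
  have hseq : ∀ i, s i = max (sSup {x | ∃ j, ∃ _ : j < i, x = s j + 1})
      (sSup {x | ∃ j, j + 1 = i ∧ x = s0 j + 1}) := by
    intro i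
    conv_lhs => rw [hs, WellFounded.fix_eq]
  have himg : ∀ i, {x | ∃ j, ∃ _ : j < i, x = s j + 1} = (fun j => s j + 1) '' Set.Iio i := by
    intro i; ext x
    simp only [Set.mem_setOf_eq, Set.mem_image, Set.mem_Iio]
    constructor
    · rintro ⟨j, hj, rfl⟩; exact ⟨j, hj, rfl⟩
    · rintro ⟨j, hj, rfl⟩; exact ⟨j, hj, rfl⟩
  have hsingl : ∀ j, {x | ∃ j', j' + 1 = j + 1 ∧ x = s0 j' + 1} = {s0 j + 1} := by
    intro j; ext x
    simp only [Set.mem_setOf_eq, Set.mem_singleton_iff]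
    constructor
    · rintro ⟨j', hj', rfl⟩
      have : j' = j := by
        have := hj'
        rwa [Ordinal.add_one_eq_succ, Ordinal.add_one_eq_succ, Order.succ_eq_succ_iff] at this
      rw [this]
    · rintro rfl; exact ⟨j, rfl, rfl⟩
  -- strict monotonicity
  have hmono : ∀ i j, i < j → s i < s j := by
    intro i j hij
    have hmem : s i + 1 ∈ {x | ∃ j', ∃ _ : j' < j, x = s j' + 1} := ⟨i, hij, rfl⟩
    have hbdd : BddAbove {x | ∃ j', ∃ _ : j' < j, x = s j' + 1} := by
      rw [himg]; exact bddAbove_image_of_lt (fun x hx => hx) _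
    have : s i + 1 ≤ sSup {x | ∃ j', ∃ _ : j' < j, x = s j' + 1} := le_csSup hbdd hmem
    calc s i < s i + 1 := lt_add_one _
    _ ≤ _ := this
    _ ≤ s j := by rw [hseq j]; exact le_max_left _ _
  -- bounded by β
  have hlt : ∀ i < Λ, s i < β := by
    intro i
    induction i using WellFounded.induction Ordinal.lt_wf with
    | _ i ih =>
      intro hiΛ
      rw [hseq i]
      have h0β : 0 < β := hβlim.pos
      apply max_lt
      · rw [himg]
        apply sSup_image_Iio_lt
        · rw [hΛ, Cardinal.lt_ord] at hiΛ
          rw [hβ]; exact hiΛ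
        · intro j hj
          exact hβlim.succ_lt (ih j hj (hj.trans hiΛ))
        · exact h0β
      · rcases em (∃ j, j + 1 = i) with ⟨j, rfl⟩ | hno
        · rw [hsingl j, csSup_singleton]
          have hjΛ : j < Λ := (lt_add_one j).trans hiΛ
          exact hβlim.succ_lt (hs0lt j hjΛ)
        · have : {x | ∃ j, j + 1 = i ∧ x = s0 j + 1} = ∅ := by
            ext x; simp only [Set.mem_setOf_eq, Set.mem_empty_iff_false, iff_false]
            rintro ⟨j, hj, -⟩; exact hno ⟨j, hj⟩
          rw [this, csSup_empty]
          exact h0β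
  -- cofinal
  have hcof : ∀ x < β, ∃ i < lam.ord, x ≤ s i := by
    intro x hx
    obtain ⟨j, hjΛ, hle⟩ := hs0cof x hx
    have hjΛ' : j + 1 < Λ := (Cardinal.isSuccLimit_ord hreg.1).succ_lt hjΛ
    refine ⟨j + 1, hjΛ', ?_⟩
    have hmem : s0 j + 1 ∈ {x | ∃ j', j' + 1 = j + 1 ∧ x = s0 j' + 1} := ⟨j, rfl, rfl⟩
    have : s0 j + 1 ≤ sSup {x | ∃ j', j' + 1 = j + 1 ∧ x = s0 j' + 1} := by
      rw [hsingl j]; rw [hsingl j] at hmem; exact le_csSup (bddAbove_singleton) hmem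
    calc x ≤ s0 j := hle
    _ ≤ s0 j + 1 := (lt_add_one _).le
    _ ≤ _ := this
    _ ≤ s (j + 1) := by rw [hseq (j+1)]; exact le_max_right _ _
  -- continuity at prelimits
  have hcont : ∀ i, (∀ x < i, ∃ y, x < y ∧ y < i) → ∀ x < s i, ∃ j < i, x ≤ s j := by
    intro i hpre x hx
    have hempty : {x | ∃ j, j + 1 = i ∧ x = s0 j + 1} = ∅ := by
      ext z; simp only [Set.mem_setOf_eq, Set.mem_empty_iff_false, iff_false]
      rintro ⟨j, hj, -⟩
      have hji : j < i := by rw [← hj]; exact lt_add_one j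
      obtain ⟨y, hy1, hy2⟩ := hpre j hji
      rw [← hj] at hy2
      have : y ≤ j := by
        have := hy2
        rwa [Ordinal.add_one_eq_succ, Order.lt_succ_iff] at this
      exact absurd hy1 (not_lt.mpr this)
    rw [hseq i, hempty, csSup_empty] at hx
    have hx' : x < sSup {x | ∃ j, ∃ _ : j < i, x = s j + 1} := by
      have := hx
      rwa [max_eq_left (by exact bot_le)] at this
    have hne : {x | ∃ j, ∃ _ : j < i, x = s j + 1}.Nonempty := by
      rcases Set.eq_empty_or_nonempty {x | ∃ j, ∃ _ : j < i, x = s j + 1} with he | hne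
      · exfalso; rw [he, csSup_empty] at hx'
        exact absurd hx' (by simp)
      · exact hne
    have hbdd : BddAbove {x | ∃ j, ∃ _ : j < i, x = s j + 1} := by
      rw [himg]; exact bddAbove_image_of_lt (fun x hx => hx) _
    obtain ⟨y, ⟨j, hj, rfl⟩, hxy⟩ := (lt_csSup_iff hbdd hne).mp hx'
    refine ⟨j, hj, ?_⟩
    have := hxy
    rwa [Ordinal.add_one_eq_succ, Order.lt_succ_iff] at this
  exact ⟨s, hmono, hlt, hcof, hcont⟩


section Clubs

variable {β : Ordinal.{u}} {lam : Cardinal.{u}} {s : Ordinal.{u} → Ordinal.{u}}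
  (hreg : lam.IsRegular) (hun : ℵ₀ < lam) (hβ : β.cof = lam)
  (hmono : ∀ i j, i < j → s i < s j) (hlt : ∀ i < lam.ord, s i < β)
  (hcf : ∀ x < β, ∃ i < lam.ord, x ≤ s i)
  (hcont : ∀ i, (∀ x < i, ∃ y, x < y ∧ y < i) → ∀ x < s i, ∃ j < i, x ≤ s j)

include hreg hun hβ hmono hlt hcf hcont in
lemma club_from_F (F : Ordinal.{u} → Ordinal.{u}) (hF : ∀ i < lam.ord, F i < lam.ord)
    (i₀ : Ordinal.{u}) (hi₀ : i₀ < lam.ord) :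
    ∃ C, IsClubIn C β ∧ ∀ γ ∈ C, ∃ i < lam.ord, γ = s i ∧ i₀ < i ∧ (∀ i' < i, F i' < i) ∧
      (∀ x < i, ∃ y, x < y ∧ y < i) := by
  classical
  set Λ := lam.ord with hΛ
  have hcofΛ : Λ.cof = lam := hreg.cof_eq
  have hΛlim : Order.IsSuccLimit Λ := Cardinal.isSuccLimit_ord hreg.1
  have hβlim : Order.IsSuccLimit β := Ordinal.aleph0_le_cof.mp (by rw [hβ]; exact hreg.1)
  set D : Set Ordinal.{u} :=
    {i | i < Λ ∧ i₀ < i ∧ (∀ i' < i, F i' < i) ∧ (∀ x < i, ∃ y, x < y ∧ y < i)} with hD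
  -- D is unbounded in Λ
  have hDunb : ∀ x < Λ, ∃ i ∈ D, x ≤ i := by
    intro x hx
    set j : ℕ → Ordinal.{u} := fun k => Nat.rec (max x i₀ + 1)
      (fun _ jk => max (jk + 1) (sSup ((fun i' => F i' + 1) '' Set.Iio jk))) k with hj
    have hj0 : j 0 = max x i₀ + 1 := rfl
    have hjsucc : ∀ k, j (k + 1) = max (j k + 1) (sSup ((fun i' => F i' + 1) '' Set.Iio (j k))) :=
      fun k => rfl
    have hjlt : ∀ k, j k < Λ := by
      intro k; induction k with
      | zero => rw [hj0]; exact hΛlim.succ_lt (max_lt hx hi₀)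
      | succ k ih =>
        rw [hjsucc]
        apply max_lt (hΛlim.succ_lt ih)
        apply sSup_image_Iio_lt
        · rw [hcofΛ, ← Cardinal.lt_ord]; exact ih
        · intro i' hi'; exact hΛlim.succ_lt (hF i' (hi'.trans ih))
        · exact hΛlim.pos
    have hjmono : ∀ k, j k < j (k + 1) := by
      intro k; rw [hjsucc]
      exact lt_max_of_lt_left (lt_add_one _)
    set jω := ⨆ k : ULift.{u} ℕ, j k.down with hjω
    have hjωlt : jω < Λ := by
      rw [hjω]; exact iSup_nat_lt (by rw [hcofΛ]; exact hun) j hjlt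
    have hle : ∀ k, j k ≤ jω := fun k => le_ciSup (Ordinal.bddAbove_range _) (ULift.up k)
    have hltjω : ∀ k, j k < jω := fun k => (hjmono k).trans_le (hle (k + 1))
    have hjωmem : ∀ y < jω, ∃ k, y < j k := by
      intro y hy
      rw [hjω] at hy
      obtain ⟨k, hk⟩ := (lt_ciSup_iff' (Ordinal.bddAbove_range _)).mp hy
      exact ⟨k.down, hk⟩
    refine ⟨jω, ⟨hjωlt, ?_, ?_, ?_⟩, ?_⟩
    · calc i₀ ≤ max x i₀ := le_max_right _ _
      _ < j 0 := lt_add_one _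
      _ < jω := hltjω 0
    · intro i' hi'
      obtain ⟨k, hk⟩ := hjωmem i' hi'
      have h1 : F i' + 1 ≤ sSup ((fun i' => F i' + 1) '' Set.Iio (j k)) :=
        le_csSup (bddAbove_image_of_lt (fun z hz => hz) _) ⟨i', hk, rfl⟩
      calc F i' < F i' + 1 := lt_add_one _
      _ ≤ _ := h1
      _ ≤ j (k + 1) := by rw [hjsucc]; exact le_max_right _ _
      _ < jω := hltjω (k + 1)
    · intro y hy
      obtain ⟨k, hk⟩ := hjωmem y hy
      exact ⟨j k, hk, hltjω k⟩
    · exact ((le_max_left x i₀).trans_lt ((lt_add_one (max x i₀)).trans_le (hle 0))).le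
  refine ⟨s '' D, ⟨?_, ?_, ?_⟩, ?_⟩
  · rintro γ ⟨i, hi, rfl⟩; exact hlt i hi.1
  · intro x hx
    obtain ⟨i, hiΛ, hxi⟩ := hcf x hx
    obtain ⟨i', hi', hii'⟩ := hDunb i hiΛ
    refine ⟨s i', ⟨i', hi', rfl⟩, ?_⟩
    rcases hii'.lt_or_eq with h | h
    · exact hxi.trans (hmono _ _ h).le
    · rw [← h]; exact hxi
  · -- closed
    intro Y hY hYne hYlt
    set Y'' : Set Ordinal.{u} := {i ∈ D | s i ∈ Y} with hY''
    have hYeq : Y = s '' Y'' := by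
      apply Set.Subset.antisymm
      · intro y hy
        obtain ⟨i, hi, rfl⟩ := hY hy
        exact ⟨i, ⟨hi, hy⟩, rfl⟩
      · rintro y ⟨i, ⟨hi, hiy⟩, rfl⟩; exact hiy
    have hY''ne : Y''.Nonempty := by
      obtain ⟨y, hy⟩ := hYne
      obtain ⟨i, hi, rfl⟩ := hY hy
      exact ⟨i, hi, hy⟩
    have hY''bd : ∀ x ∈ Y'', x < Λ := fun x hx => hx.1.1
    have hY''bdd : BddAbove Y'' := by
      have : Small.{u} Y'' := small_subset (show Y'' ⊆ Set.Iio Λ from fun x hx => hY''bd x hx)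
      exact Ordinal.bddAbove_of_small
    have hYbdd : BddAbove Y := by
      have h1 : ∀ y ∈ Y, y < β := fun y hy => (hY hy).elim (fun i hi => hi.2 ▸ hlt i hi.1.1)
      have : Small.{u} Y := small_subset (show Y ⊆ Set.Iio β from fun x hx => h1 x hx)
      exact Ordinal.bddAbove_of_small
    set istar := sSup Y'' with histar
    have histarΛ : istar < Λ := by
      by_contra hcon
      push_neg at hcon
      have hunb : ∀ x < Λ, ∃ i ∈ Y'', x < i := by
        intro x hx
        exact exists_lt_of_lt_csSup hY''ne (hx.trans_le hcon)
      have : β ≤ sSup Y := by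
        apply le_of_forall_lt
        intro z hz
        obtain ⟨jz, hjzΛ, hjz⟩ := hcf z hz
        obtain ⟨i, hiY'', hji⟩ := hunb jz hjzΛ
        have : s i ∈ Y := hiY''.2
        calc z ≤ s jz := hjz
        _ < s i := hmono _ _ hji
        _ ≤ sSup Y := le_csSup hYbdd this
      exact absurd hYlt (not_lt.mpr this)
    by_cases hattain : istar ∈ Y''
    · have h1 : sSup Y = s istar := by
        apply le_antisymm
        · apply csSup_le hYne
          intro y hy
          obtain ⟨i, hi, rfl⟩ := (hYeq ▸ hy : y ∈ s '' Y'')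
          have : i ≤ istar := le_csSup hY''bdd hi
          rcases this.lt_or_eq with h | h
          · exact (hmono _ _ h).le
          · rw [h]
        · exact le_csSup hYbdd (hYeq ▸ ⟨istar, hattain, rfl⟩)
      rw [h1]; exact ⟨istar, hattain.1, rfl⟩
    · have hpre : ∀ x < istar, ∃ y, x < y ∧ y < istar := by
        intro x hx
        obtain ⟨i, hiY'', hxi⟩ := exists_lt_of_lt_csSup hY''ne hx
        have hiistar : i < istar := by
          have h1 : i ≤ istar := le_csSup hY''bdd hiY''
          rcases h1.lt_or_eq with h | h
          · exact h
          · exact absurd (h ▸ hiY'') hattain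
        exact ⟨i, hxi, hiistar⟩
      have hDmem : istar ∈ D := by
        obtain ⟨i1, hi1⟩ := id hY''ne
        have hi1le : i1 ≤ istar := le_csSup hY''bdd hi1
        refine ⟨histarΛ, ?_, ?_, hpre⟩
        · exact hi1.1.2.1.trans_le hi1le
        · intro i' hi'
          obtain ⟨i2, hxi2, hi2⟩ := hpre i' hi'
          obtain ⟨i3, hi3Y'', hi3⟩ := exists_lt_of_lt_csSup hY''ne hi2
          have : F i' < i3 := hi3Y''.1.2.2.1 i' (hxi2.trans hi3)
          exact this.trans_le (le_csSup hY''bdd hi3Y'')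
      have h2 : sSup Y = s istar := by
        apply le_antisymm
        · apply csSup_le hYne
          intro y hy
          obtain ⟨i, hi, rfl⟩ := (hYeq ▸ hy : y ∈ s '' Y'')
          have h1 : i ≤ istar := le_csSup hY''bdd hi
          have h3 : i < istar := h1.lt_of_ne (fun h => hattain (h ▸ hi))
          exact (hmono _ _ h3).le
        · apply le_of_forall_lt
          intro x hx
          obtain ⟨j, hj, hxj⟩ := hcont istar hpre x hx
          obtain ⟨i, hiY'', hji⟩ := exists_lt_of_lt_csSup hY''ne hj
          calc x ≤ s j := hxj
          _ < s i := hmono _ _ hji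
          _ ≤ sSup Y := le_csSup hYbdd hiY''.2
      rw [h2]; exact ⟨istar, hDmem, rfl⟩
  · rintro γ ⟨i, hi, rfl⟩
    exact ⟨i, hi.1, rfl, hi.2.1, hi.2.2.1, hi.2.2.2⟩

include hreg hun hβ hmono hlt hcf hcont in
lemma FB {P : Set Ordinal.{u}} (hstatP : ∀ C, IsClubIn C β → ∃ γ ∈ C, γ ∈ P)
    (r : Ordinal.{u} → Ordinal.{u}) (hr : ∀ γ ∈ P, γ < β → r γ < γ) :
    ∃ a < β, ∀ x < β, ∃ γ, γ ∈ P ∧ γ < β ∧ x ≤ γ ∧ r γ ≤ a := by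
  classical
  by_contra hcon
  push_neg at hcon
  have hβlim : Order.IsSuccLimit β := Ordinal.aleph0_le_cof.mp (by rw [hβ]; exact hreg.1)
  have hΛlim : Order.IsSuccLimit lam.ord := Cardinal.isSuccLimit_ord hreg.1
  choose bx hbx1 hbx2 using hcon
  set bx' : Ordinal.{u} → Ordinal.{u} := fun a => if h : a < β then bx a h else 0 with hbx'
  have hbx'2 : ∀ a < β, ∀ γ, γ ∈ P → γ < β → bx' a ≤ γ → a < r γ := by
    intro a ha γ h1 h2 h3
    rw [hbx'] at h3; simp only [dif_pos ha] at h3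
    exact hbx2 a ha γ h1 h2 h3
  have hbx'1 : ∀ a < β, bx' a < β := by
    intro a ha; rw [hbx']; simp only [dif_pos ha]; exact hbx1 a ha
  have hFex : ∀ i < lam.ord, ∃ j, j < lam.ord ∧ bx' (s i) < s j := by
    intro i hi
    have h1 : bx' (s i) < β := hbx'1 _ (hlt i hi)
    have h2 : bx' (s i) + 1 < β := hβlim.succ_lt h1
    obtain ⟨j, hj, hle⟩ := hcf _ h2
    exact ⟨j, hj, lt_of_lt_of_le (lt_add_one _) hle⟩
  set F : Ordinal.{u} → Ordinal.{u} := fun i =>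
    if h : ∃ j, j < lam.ord ∧ bx' (s i) < s j then h.choose else 0 with hF
  have hFlt : ∀ i < lam.ord, F i < lam.ord := by
    intro i hi
    have h := hFex i hi
    rw [hF]; simp only [dif_pos h]; exact h.choose_spec.1
  have hFspec : ∀ i < lam.ord, bx' (s i) < s (F i) := by
    intro i hi
    have h := hFex i hi
    rw [hF]; simp only [dif_pos h]; exact h.choose_spec.2
  obtain ⟨C, hC, hCspec⟩ := club_from_F hreg hun hβ hmono hlt hcf hcont F hFlt 0 hΛlim.pos
  obtain ⟨γ, hγC, hγP⟩ := hstatP C hC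
  obtain ⟨i, hiΛ, rfl, -, hFcl, hpre⟩ := hCspec γ hγC
  have hγβ : s i < β := hlt i hiΛ
  have hrγ : r (s i) < s i := hr _ hγP hγβ
  obtain ⟨j, hji, hrj⟩ := hcont i hpre _ hrγ
  have hjΛ : j < lam.ord := hji.trans hiΛ
  have haβ : s j < β := hlt j hjΛ
  have hbale : bx' (s j) ≤ s i := by
    have h1 : bx' (s j) < s (F j) := hFspec j hjΛ
    have h2 : F j < i := hFcl j hji
    exact (h1.trans (hmono _ _ h2)).le
  exact absurd hrj (not_le.mpr (hbx'2 (s j) haβ (s i) hγP hγβ hbale))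

end Clubs

section GoodPkg

variable {f : Ordinal.{u} → ℕ → Ordinal.{u}} {μ γ : Ordinal.{u}} {η : Cardinal.{u}}
  {A : Set Ordinal.{u}} {m : ℕ}
  (hinc : ∀ α β', α < β' → β' < μ → EvLT (f α) (f β'))
  (hγμ : γ < μ)
  (hA1 : ∀ ξ ∈ A, ξ < γ) (hA2 : ∀ x < γ, ∃ ξ ∈ A, x ≤ ξ)
  (hA3 : ∀ n, m ≤ n → StrictMonoOn (fun ξ => f ξ n) A)
  (hγcof : γ.cof = η) (hη : ℵ₀ < η)

include hγcof hη in
lemma good_limit : Order.IsSuccLimit γ :=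
  Ordinal.aleph0_le_cof.mp (by rw [hγcof]; exact hη.le)

include hA1 hA2 hγcof hη in
lemma good_nonempty : A.Nonempty := by
  obtain ⟨ξ, hξ, -⟩ := hA2 0 (good_limit hγcof hη).pos
  exact ⟨ξ, hξ⟩

/-- the pointwise supremum along a good point -/
def gsup (f : Ordinal.{u} → ℕ → Ordinal.{u}) (A : Set Ordinal.{u}) : ℕ → Ordinal.{u} :=
  fun n => sSup ((fun ξ => f ξ n) '' A)

include hA1 in
lemma gsup_ge (ξ : Ordinal.{u}) (hξ : ξ ∈ A) (n : ℕ) : f ξ n ≤ gsup f A n :=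
  le_csSup (bddAbove_image_of_lt hA1 _) ⟨ξ, hξ, rfl⟩

include hA1 hA2 hA3 hγcof hη in
lemma gsup_gt {ξ : Ordinal.{u}} (hξ : ξ ∈ A) {n : ℕ} (hn : m ≤ n) :
    f ξ n < gsup f A n := by
  obtain ⟨ξ', hξ', hge⟩ := hA2 (ξ + 1) ((good_limit hγcof hη).succ_lt (hA1 ξ hξ))
  have h1 : ξ < ξ' := (lt_add_one ξ).trans_le hge
  exact ((hA3 n hn) hξ hξ' h1).trans_le (gsup_ge hA1 ξ' hξ' n)

include hA1 hA2 hA3 hγcof hη in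
lemma gsup_pos {n : ℕ} (hn : m ≤ n) : 0 < gsup f A n := by
  obtain ⟨ξ, hξ⟩ := good_nonempty hA1 hA2 hγcof hη
  exact (zero_le (a := _)).trans_lt (gsup_gt hA1 hA2 hA3 hγcof hη hξ hn)

include hinc hγμ hA1 hA2 hγcof hη in
lemma gsup_ub {α : Ordinal.{u}} (hα : α < γ) : EvLT (f α) (gsup f A) := by
  obtain ⟨ξ', hξ', hge⟩ := hA2 (α + 1) ((good_limit hγcof hη).succ_lt hα)
  have h1 : α < ξ' := (lt_add_one α).trans_le hge
  have h2 : EvLT (f α) (f ξ') := hinc α ξ' h1 ((hA1 ξ' hξ').trans hγμ)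
  apply h2.subset
  intro n hn
  simp only [Set.mem_setOf_eq] at hn ⊢
  intro hcon
  exact hn (hcon.trans_le (gsup_ge hA1 ξ' hξ' n))

include hA1 hA2 hA3 hγcof hη in
lemma gsup_exact (g : ℕ → Ordinal.{u}) (hg : EvLT g (gsup f A)) :
    ∃ ξ < γ, EvLT g (f ξ) := by
  classical
  obtain ⟨a₀, ha₀⟩ := good_nonempty hA1 hA2 hγcof hη
  set ξsel : ℕ → Ordinal.{u} := fun n =>
    if hx : ∃ ξ ∈ A, g n < f ξ n then hx.choose else a₀ with hξsel
  have hξselA : ∀ n, ξsel n ∈ A := by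
    intro n; rw [hξsel]
    by_cases hx : ∃ ξ ∈ A, g n < f ξ n
    · simp only [dif_pos hx]; exact hx.choose_spec.1
    · simp only [dif_neg hx]; exact ha₀
  have hξspec : ∀ n, g n < gsup f A n → g n < f (ξsel n) n := by
    intro n hn
    have hbdd : BddAbove ((fun ξ => f ξ n) '' A) := bddAbove_image_of_lt hA1 _
    have hne : ((fun ξ => f ξ n) '' A).Nonempty :=
      ⟨_, ⟨a₀, ha₀, rfl⟩⟩
    obtain ⟨y, ⟨ξ, hξ, rfl⟩, hy⟩ := (lt_csSup_iff hbdd hne).mp hn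
    have hx : ∃ ξ ∈ A, g n < f ξ n := ⟨ξ, hξ, hy⟩
    rw [hξsel]; simp only [dif_pos hx]; exact hx.choose_spec.2
  have hcof' : ℵ₀ < γ.cof := by rw [hγcof]; exact hη
  obtain ⟨x, hxγ, hxgt⟩ := exists_above_iSup_nat hcof' ξsel (fun k => hA1 _ (hξselA k))
  obtain ⟨xihat, hxihatA, hxle⟩ := hA2 x hxγ
  refine ⟨xihat, hA1 _ hxihatA, ?_⟩
  have hsub : {n | ¬ g n < f xihat n} ⊆ {n | ¬ g n < gsup f A n} ∪ Set.Iio m := by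
    intro n hn
    simp only [Set.mem_setOf_eq, Set.mem_union, Set.mem_Iio] at hn ⊢
    by_contra hcon
    push_neg at hcon
    obtain ⟨h1, h2⟩ := hcon
    have h4 : g n < f (ξsel n) n := hξspec n h1
    have h5 : ξsel n < xihat := (hxgt n).trans_le hxle
    exact hn (h4.trans ((hA3 n h2) (hξselA n) hxihatA h5))
  exact (hg.union (Set.finite_Iio m)).subset hsub

include hA1 hA2 hA3 hγcof hη in
lemma gsup_cof {n : ℕ} (hn : m ≤ n) : η ≤ (gsup f A n).cof := by
  classical
  by_contra hcon
  push_neg at hcon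
  obtain ⟨a₀, ha₀⟩ := good_nonempty hA1 hA2 hγcof hη
  set o := gsup f A n with ho
  obtain ⟨q, hq⟩ := Ordinal.exists_fundamental_sequence o
  have hqlt : ∀ b hb, q b hb < o := by
    intro b hb
    have := Ordinal.lt_blsub q b hb
    rwa [hq.blsub_eq] at this
  set Ξ : ∀ b < o.cof.ord, Ordinal.{u} := fun b hb =>
    if hx : ∃ ξ ∈ A, q b hb < f ξ n then hx.choose else a₀ with hΞ
  have hΞA : ∀ b hb, Ξ b hb ∈ A := by
    intro b hb; rw [hΞ]
    by_cases hx : ∃ ξ ∈ A, q b hb < f ξ n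
    · simp only [dif_pos hx]; exact hx.choose_spec.1
    · simp only [dif_neg hx]; exact ha₀
  have hΞspec : ∀ b hb, q b hb < f (Ξ b hb) n := by
    intro b hb
    have hbdd : BddAbove ((fun ξ => f ξ n) '' A) := bddAbove_image_of_lt hA1 _
    have hne : ((fun ξ => f ξ n) '' A).Nonempty := ⟨_, ⟨a₀, ha₀, rfl⟩⟩
    obtain ⟨y, ⟨ξ, hξ, rfl⟩, hy⟩ := (lt_csSup_iff hbdd hne).mp (hqlt b hb)
    have hx : ∃ ξ ∈ A, q b hb < f ξ n := ⟨ξ, hξ, hy⟩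
    rw [hΞ]; simp only [dif_pos hx]; exact hx.choose_spec.2
  have hbsup : Ordinal.bsup o.cof.ord Ξ < γ := by
    apply Ordinal.bsup_lt_ord _ (fun b hb => hA1 _ (hΞA b hb))
    rw [Cardinal.card_ord, hγcof]
    exact hcon
  have hγle : γ ≤ Ordinal.bsup o.cof.ord Ξ := by
    apply le_of_forall_lt
    intro x hx
    obtain ⟨ξ, hξA, hxξ⟩ := hA2 x hx
    have h1 : f ξ n < o := gsup_gt hA1 hA2 hA3 hγcof hη hξA hn
    have h2 : f ξ n < Ordinal.blsub o.cof.ord q := by rwa [hq.blsub_eq]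
    obtain ⟨b, hb, hle⟩ := Ordinal.lt_blsub_iff.mp h2
    have h3 : f ξ n < f (Ξ b hb) n := hle.trans_lt (hΞspec b hb)
    have h4 : ξ < Ξ b hb := by
      by_contra hcc
      push_neg at hcc
      rcases hcc.lt_or_eq with hlt | heq
      · exact absurd (((hA3 n hn) (hΞA b hb) hξA hlt).trans h3) (lt_irrefl _)
      · rw [heq] at h3; exact absurd h3 (lt_irrefl _)
    exact (hxξ.trans_lt h4).trans_le (Ordinal.le_bsup _ _ _)
  exact absurd (hγle.trans_lt hbsup) (lt_irrefl _)

end GoodPkg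

lemma exists_incr_cof {γ : Ordinal.{u}} {A : Set Ordinal.{u}} (hA1 : ∀ x ∈ A, x < γ)
    (hA2 : ∀ x < γ, ∃ y ∈ A, x ≤ y) (hγ : ℵ₀ ≤ γ.cof) :
    ∃ a : Ordinal.{u} → Ordinal.{u}, (∀ d < γ.cof.ord, a d ∈ A) ∧
      (∀ d d', d < d' → d' < γ.cof.ord → a d < a d') ∧
      (∀ x < γ, ∃ d < γ.cof.ord, x ≤ a d) := by
  classical
  have hγlim : Order.IsSuccLimit γ := Ordinal.aleph0_le_cof.mp hγ
  have hAne : A.Nonempty := by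
    obtain ⟨y, hy, -⟩ := hA2 0 hγlim.pos; exact ⟨y, hy⟩
  obtain ⟨a₀, ha₀⟩ := hAne
  obtain ⟨q, hq⟩ := Ordinal.exists_fundamental_sequence γ
  set q' : Ordinal.{u} → Ordinal.{u} := fun d => if hd : d < γ.cof.ord then q d hd else 0 with hq'
  have hq'lt : ∀ d < γ.cof.ord, q' d < γ := by
    intro d hd
    simp only [hq', dif_pos hd]
    have := Ordinal.lt_blsub q d hd
    rwa [hq.blsub_eq] at this
  have hq'cof : ∀ x < γ, ∃ d < γ.cof.ord, x ≤ q' d := by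
    intro x hx
    have : x < Ordinal.blsub γ.cof.ord q := by rwa [hq.blsub_eq]
    obtain ⟨d, hd, hle⟩ := Ordinal.lt_blsub_iff.mp this
    exact ⟨d, hd, by simp only [hq', dif_pos hd]; exact hle⟩
  set a : Ordinal.{u} → Ordinal.{u} := Ordinal.lt_wf.fix (fun d rec =>
    if hx : ∃ y ∈ A, max (q' d) (sSup {z | ∃ d', ∃ h : d' < d, z = rec d' h + 1}) ≤ y
    then hx.choose else a₀) with ha
  have haeq : ∀ d, a d =
      if hx : ∃ y ∈ A, max (q' d) (sSup {z | ∃ d', ∃ _ : d' < d, z = a d' + 1}) ≤ y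
      then hx.choose else a₀ := by
    intro d
    conv_lhs => rw [ha, WellFounded.fix_eq]
  have himg : ∀ d, {z | ∃ d', ∃ _ : d' < d, z = a d' + 1} = (fun d' => a d' + 1) '' Set.Iio d := by
    intro d; ext z
    simp only [Set.mem_setOf_eq, Set.mem_image, Set.mem_Iio]
    constructor
    · rintro ⟨d', hd', rfl⟩; exact ⟨d', hd', rfl⟩
    · rintro ⟨d', hd', rfl⟩; exact ⟨d', hd', rfl⟩
  have hmain : ∀ d < γ.cof.ord, a d ∈ A ∧ (∀ d' < d, a d' < a d) ∧ q' d ≤ a d := by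
    intro d
    induction d using WellFounded.induction Ordinal.lt_wf with
    | _ d ih =>
      intro hd
      have hsup : sSup {z | ∃ d', ∃ _ : d' < d, z = a d' + 1} < γ := by
        rw [himg]
        apply sSup_image_Iio_lt
        · calc d.card < γ.cof := by rwa [← Cardinal.lt_ord]
          _ = γ.cof := rfl
        · intro d' hd'
          exact hγlim.succ_lt (hA1 _ (ih d' hd' (hd'.trans hd)).1)
        · exact hγlim.pos
      have hmax : max (q' d) (sSup {z | ∃ d', ∃ _ : d' < d, z = a d' + 1}) < γ :=
        max_lt (hq'lt d hd) hsup
      have hx : ∃ y ∈ A, max (q' d) (sSup {z | ∃ d', ∃ _ : d' < d, z = a d' + 1}) ≤ y :=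
        hA2 _ hmax
      have had : a d = hx.choose := by rw [haeq d]; simp only [dif_pos hx]
      have hspec := hx.choose_spec
      refine ⟨had ▸ hspec.1, ?_, ?_⟩
      · intro d' hd'
        have h1 : a d' + 1 ≤ sSup {z | ∃ d'', ∃ _ : d'' < d, z = a d'' + 1} := by
          refine le_csSup ?_ ⟨d', hd', rfl⟩
          rw [himg]; exact bddAbove_image_of_lt (fun z hz => hz) _
        calc a d' < a d' + 1 := lt_add_one _
        _ ≤ _ := h1
        _ ≤ max _ _ := le_max_right _ _
        _ ≤ hx.choose := hspec.2
        _ = a d := had.symm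
      · calc q' d ≤ max _ _ := le_max_left _ _
        _ ≤ hx.choose := hspec.2
        _ = a d := had.symm
  refine ⟨a, fun d hd => (hmain d hd).1, fun d d' hdd' hd' => (hmain d' hd').2.1 d hdd', ?_⟩
  intro x hx
  obtain ⟨d, hd, hle⟩ := hq'cof x hx
  exact ⟨d, hd, hle.trans (hmain d hd).2.2⟩


section SL
variable {β μ : Ordinal.{u}} {lam η : Cardinal.{u}} {s : Ordinal.{u} → Ordinal.{u}}
  {f : Ordinal.{u} → ℕ → Ordinal.{u}}
  (hreg : lam.IsRegular) (hun : ℵ₀ < lam) (hβ : β.cof = lam)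
  (hmono : ∀ i j, i < j → s i < s j) (hlt : ∀ i < lam.ord, s i < β)
  (hcf : ∀ x < β, ∃ i < lam.ord, x ≤ s i)
  (hcont : ∀ i, (∀ x < i, ∃ y, x < y ∧ y < i) → ∀ x < s i, ∃ j < i, x ≤ s j)
  (hinc : ∀ α β', α < β' → β' < μ → EvLT (f α) (f β'))
  (hβμ : β < μ) (hη : ℵ₀ < η)
  (hstatη : ∀ C, IsClubIn C β → ∃ γ ∈ C, γ.cof = η ∧ IsGoodPt f γ)

include hreg hun hβ hmono hlt hcf hcont hinc hβμ hη hstatη in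
lemma stage_lemma (Sfam : ℕ → Set Ordinal.{u})
    (hStop : ∀ n, ∀ α < β, ∃ x ∈ Sfam n, f α n ≤ x)
    (hScnt : ∀ n, ∃ gi : ULift.{u} ℕ → Ordinal.{u}, Sfam n ⊆ Set.range gi) :
    ∃ abar < β, ∀ α, abar ≤ α → α < β →
      {n | sInf {x ∈ Sfam n | f α n ≤ x} ≠ sInf {x ∈ Sfam n | f abar n ≤ x}}.Finite := by
  classical
  have hβlim : Order.IsSuccLimit β := Ordinal.aleph0_le_cof.mp (by rw [hβ]; exact hreg.1)
  set t : Ordinal.{u} → ℕ → Ordinal.{u} := fun α n => sInf {x ∈ Sfam n | f α n ≤ x} with ht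
  have htne : ∀ α, α < β → ∀ n : ℕ, {x ∈ Sfam n | f α n ≤ x}.Nonempty := by
    intro α hα n
    obtain ⟨x, hx1, hx2⟩ := hStop n α hα
    exact ⟨x, hx1, hx2⟩
  have htmem : ∀ α, α < β → ∀ n : ℕ, t α n ∈ Sfam n ∧ f α n ≤ t α n :=
    fun α hα n => csInf_mem (htne α hα n)
  have htmono : ∀ α α' (n : ℕ), α' < β → f α n ≤ f α' n → t α n ≤ t α' n := by
    intro α α' n hα' hff
    apply csInf_le_csInf (OrderBot.bddBelow _) (htne α' hα' n)
    intro x hx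
    exact ⟨hx.1, hff.trans hx.2⟩
  have htev : ∀ α α', α < α' → α' < β → {n | ¬ t α n ≤ t α' n}.Finite := by
    intro α α' hαα' hα'
    apply (hinc α α' hαα' (hα'.trans hβμ)).subset
    intro n hn
    simp only [Set.mem_setOf_eq] at hn ⊢
    intro hcon
    exact hn (htmono α α' n hα' hcon.le)
  -- stabilization below a good point
  have key : ∀ γ, γ.cof = η → IsGoodPt f γ → γ < β →
      ∃ ξ₀ < γ, ∀ α, ξ₀ ≤ α → α < γ → {n | t α n ≠ t ξ₀ n}.Finite := by
    intro γ hγcof hγgood hγβ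
    obtain ⟨A, hA1, hA2, m, hA3⟩ := hγgood
    have hγlim : Order.IsSuccLimit γ := Ordinal.aleph0_le_cof.mp (by rw [hγcof]; exact hη.le)
    have hAne : A.Nonempty := by
      obtain ⟨y, hy, -⟩ := hA2 0 hγlim.pos; exact ⟨y, hy⟩
    obtain ⟨a₀, ha₀⟩ := hAne
    have hbn : ∀ n : ℕ, ∃ b ∈ A, ∀ ξ ∈ A, b ≤ ξ → m ≤ n → t ξ n = t b n := by
      intro n
      by_cases hmn : m ≤ n
      · obtain ⟨gi, hgi⟩ := hScnt n
        have hm' : ∀ ξ ∈ A, ∀ ξ' ∈ A, ξ ≤ ξ' → t ξ n ≤ t ξ' n := by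
          intro ξ hξ ξ' hξ' hle
          rcases hle.lt_or_eq with hlt' | heq
          · exact htmono ξ ξ' n ((hA1 _ hξ').trans hγβ) ((hA3 n hmn) hξ hξ' hlt').le
          · rw [heq]
        have hv : ∀ ξ ∈ A, t ξ n ∈ Set.range gi :=
          fun ξ hξ => hgi (htmem ξ ((hA1 _ hξ).trans hγβ) n).1
        have hcard : #(ULift.{u} ℕ) < γ.cof := by
          rw [Cardinal.mk_denumerable, hγcof]; exact hη
        obtain ⟨b, hbA, hb⟩ := mono_stab hA1 hA2 (fun ξ => t ξ n) hm' gi hv hcard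
          (by rw [hγcof]; exact hη.le)
        exact ⟨b, hbA, fun ξ hξ hbξ _ => hb ξ hξ hbξ⟩
      · exact ⟨a₀, ha₀, fun ξ hξ hle hmn' => absurd hmn' hmn⟩
    choose bsel hbselA hbspec using hbn
    have hcofγ : ℵ₀ < γ.cof := by rw [hγcof]; exact hη
    obtain ⟨x, hxγ, hxgt⟩ := exists_above_iSup_nat hcofγ bsel (fun k => hA1 _ (hbselA k))
    obtain ⟨ξ₀, hξ₀A, hxle⟩ := hA2 x hxγ
    have hstab : ∀ ξ ∈ A, ξ₀ ≤ ξ → ∀ n, m ≤ n → t ξ n = t ξ₀ n := by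
      intro ξ hξ hξ₀ξ n hmn
      have h1 : t ξ n = t (bsel n) n :=
        hbspec n ξ hξ (((hxgt n).trans_le hxle).trans_le hξ₀ξ).le hmn
      have h2 : t ξ₀ n = t (bsel n) n :=
        hbspec n ξ₀ hξ₀A ((hxgt n).trans_le hxle).le hmn
      rw [h1, h2]
    refine ⟨ξ₀, hA1 _ hξ₀A, ?_⟩
    intro α hξ₀α hαγ
    rcases hξ₀α.lt_or_eq with hlt' | heq
    · obtain ⟨ξ', hξ'A, hξ'ge⟩ := hA2 (α + 1) (hγlim.succ_lt hαγ)
      have hαξ' : α < ξ' := (lt_add_one α).trans_le hξ'ge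
      have hsub : {n | t α n ≠ t ξ₀ n} ⊆
          {n | ¬ t ξ₀ n ≤ t α n} ∪ {n | ¬ t α n ≤ t ξ' n} ∪ Set.Iio m := by
        intro n hn
        simp only [Set.mem_setOf_eq, Set.mem_union, Set.mem_Iio] at hn ⊢
        by_contra hcon
        push_neg at hcon
        obtain ⟨⟨h1, h2⟩, h3⟩ := hcon
        have h4 : t ξ' n = t ξ₀ n := hstab ξ' hξ'A (hlt'.le.trans hαξ'.le) n h3
        exact hn (le_antisymm (h2.trans h4.le) h1)
      exact (((htev ξ₀ α hlt' (hαγ.trans hγβ)).union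
        (htev α ξ' hαξ' ((hA1 _ hξ'A).trans hγβ))).union (Set.finite_Iio m)).subset hsub
    · rw [← heq]
      simp only [ne_eq, not_true_eq_false, Set.setOf_false]
      exact Set.finite_empty
  -- pressing down
  set P : Set Ordinal.{u} := {γ | γ.cof = η ∧ IsGoodPt f γ} with hP
  set r : Ordinal.{u} → Ordinal.{u} := fun γ =>
    if h : γ ∈ P ∧ γ < β then (key γ h.1.1 h.1.2 h.2).choose else 0 with hr
  have hrlt : ∀ γ ∈ P, γ < β → r γ < γ := by
    intro γ hγ hγβ
    rw [hr]; simp only [dif_pos (And.intro hγ hγβ)]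
    exact (key γ hγ.1 hγ.2 hγβ).choose_spec.1
  have hrspec : ∀ γ (hγ : γ ∈ P) (hγβ : γ < β), ∀ α, r γ ≤ α → α < γ →
      {n | t α n ≠ t (r γ) n}.Finite := by
    intro γ hγ hγβ α h1 h2
    have hreq : r γ = (key γ hγ.1 hγ.2 hγβ).choose := by
      rw [hr]; simp only [dif_pos (And.intro hγ hγβ)]
    rw [hreq] at h1 ⊢
    exact (key γ hγ.1 hγ.2 hγβ).choose_spec.2 α h1 h2
  obtain ⟨a, haβ, hgood⟩ := FB hreg hun hβ hmono hlt hcf hcont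
    (P := P) (fun C hC => hstatη C hC) r hrlt
  refine ⟨a, haβ, ?_⟩
  intro α haα hαβ
  obtain ⟨γ, hγP, hγβ, hγge, hγr⟩ := hgood (α + 1) (hβlim.succ_lt hαβ)
  have hαγ : α < γ := (lt_add_one α).trans_le hγge
  have h1 : {n | t α n ≠ t (r γ) n}.Finite := hrspec γ hγP hγβ α (hγr.trans haα) hαγ
  have h2 : {n | t a n ≠ t (r γ) n}.Finite := hrspec γ hγP hγβ a hγr (haα.trans_lt hαγ)
  apply (h1.union h2).subset
  intro n hn
  simp only [Set.mem_setOf_eq, Set.mem_union] at hn ⊢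
  by_contra hcon
  push_neg at hcon
  exact hn (hcon.1.trans hcon.2.symm)

end SL

/-- projection of `f α` to the sets `S n` -/
def tProj (f : Ordinal.{u} → ℕ → Ordinal.{u}) (S : ℕ → Set Ordinal.{u}) (α : Ordinal.{u})
    (n : ℕ) : Ordinal.{u} := sInf {x ∈ S n | f α n ≤ x}

/-- stage property: the projections stabilize to an upper bound which is witnessed non-exact
by `g` -/
def StageProp (f : Ordinal.{u} → ℕ → Ordinal.{u}) (β : Ordinal.{u}) (S : ℕ → Set Ordinal.{u})
    (g : ℕ → Ordinal.{u}) : Prop :=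
  ∃ a, a < β ∧ (∀ α, a ≤ α → α < β → {n | tProj f S α n ≠ tProj f S a n}.Finite) ∧
    EvLT g (tProj f S a) ∧ ∀ α < β, ¬ EvLT g (f α)

/-- the set of values chosen before stage ζ, together with a top element -/
def SSet (top : ℕ → Ordinal.{u}) (G : Ordinal.{u} → ℕ → Ordinal.{u}) (ζ : Ordinal.{u})
    (n : ℕ) : Set Ordinal.{u} := insert (top n) {y | ∃ ξ, ∃ _ : ξ < ζ, G ξ n = y}

/-- transfinite choice of non-caught witnesses -/
def stageG (f : Ordinal.{u} → ℕ → Ordinal.{u}) (β : Ordinal.{u}) (top : ℕ → Ordinal.{u}) :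
    Ordinal.{u} → ℕ → Ordinal.{u} :=
  Ordinal.lt_wf.fix fun ζ rec =>
    if hex : ∃ g, StageProp f β
        (fun n => insert (top n) {y | ∃ ξ, ∃ h : ξ < ζ, rec ξ h n = y}) g
    then hex.choose else fun _ => 0

lemma stageG_eq (f : Ordinal.{u} → ℕ → Ordinal.{u}) (β : Ordinal.{u})
    (top : ℕ → Ordinal.{u}) (ζ : Ordinal.{u}) :
    stageG f β top ζ =
      if hex : ∃ g, StageProp f β (SSet top (stageG f β top) ζ) g
      then hex.choose else fun _ => 0 := by
  conv_lhs => rw [stageG, WellFounded.fix_eq]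
  rfl


section EE
variable {β μ : Ordinal.{u}} {lam η : Cardinal.{u}} {s : Ordinal.{u} → Ordinal.{u}}
  {f : Ordinal.{u} → ℕ → Ordinal.{u}}
  (hreg : lam.IsRegular) (hun : ℵ₀ < lam) (hβ : β.cof = lam)
  (hmono : ∀ i j, i < j → s i < s j) (hlt : ∀ i < lam.ord, s i < β)
  (hcf : ∀ x < β, ∃ i < lam.ord, x ≤ s i)
  (hcont : ∀ i, (∀ x < i, ∃ y, x < y ∧ y < i) → ∀ x < s i, ∃ j < i, x ≤ s j)
  (hinc : ∀ α β', α < β' → β' < μ → EvLT (f α) (f β'))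
  (hβμ : β < μ) (hη : ℵ₀ < η)
  (hstatη : ∀ C, IsClubIn C β → ∃ γ ∈ C, γ.cof = η ∧ IsGoodPt f γ)

include hreg hun hβ hmono hlt hcf hcont hinc hβμ hη hstatη in
lemma exists_eub (hlamℵ₁ : ℵ₁ < lam) :
    ∃ h : ℕ → Ordinal.{u}, (∀ α < β, EvLT (f α) h) ∧
      ∀ g, EvLT g h → ∃ α < β, EvLT g (f α) := by
  classical
  by_contra hno
  push_neg at hno
  have hβlim : Order.IsSuccLimit β := Ordinal.aleph0_le_cof.mp (by rw [hβ]; exact hreg.1)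
  set top : ℕ → Ordinal.{u} := fun n => sSup ((fun α => f α n) '' Set.Iio β) + 1 with htopdef
  have htop : ∀ (n : ℕ), ∀ α < β, f α n < top n := by
    intro n α hα
    have h1 : f α n ≤ sSup ((fun α => f α n) '' Set.Iio β) :=
      le_csSup (bddAbove_image_of_lt (fun x hx => hx) _) ⟨α, hα, rfl⟩
    exact h1.trans_lt (lt_add_one _)
  set G := stageG f β top with hGdef
  have hGeq : ∀ ζ, G ζ = if hex : ∃ g, StageProp f β (SSet top G ζ) g
      then hex.choose else fun _ => 0 := fun ζ => stageG_eq f β top ζ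
  set ω1 : Ordinal.{u} := (ℵ₁ : Cardinal.{u}).ord with hω1
  have hω1cof : ω1.cof = ℵ₁ := Cardinal.isRegular_aleph_one.cof_eq
  have hω1lim : Order.IsSuccLimit ω1 := Cardinal.isSuccLimit_ord (Cardinal.aleph0_lt_aleph_one).le
  have hStop : ∀ ζ (n : ℕ), ∀ α < β, ∃ x ∈ SSet top G ζ n, f α n ≤ x :=
    fun ζ n α hα => ⟨top n, Set.mem_insert _ _, (htop n α hα).le⟩
  have hSne : ∀ ζ α, α < β → ∀ n : ℕ, {x ∈ SSet top G ζ n | f α n ≤ x}.Nonempty := by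
    intro ζ α hα n
    obtain ⟨x, h1, h2⟩ := hStop ζ n α hα
    exact ⟨x, h1, h2⟩
  have hSmono : ∀ ζ ζ' : Ordinal.{u}, ζ ≤ ζ' → ∀ n, SSet top G ζ n ⊆ SSet top G ζ' n := by
    intro ζ ζ' hζζ' n x hx
    rcases hx with hx | ⟨ξ, hξ, rfl⟩
    · exact Or.inl hx
    · exact Or.inr ⟨ξ, hξ.trans_le hζζ', rfl⟩
  have htmono : ∀ ζ ζ' : Ordinal.{u}, ζ ≤ ζ' → ∀ α, α < β → ∀ n,
      tProj f (SSet top G ζ') α n ≤ tProj f (SSet top G ζ) α n := by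
    intro ζ ζ' hζζ' α hα n
    apply csInf_le_csInf (OrderBot.bddBelow _) (hSne ζ α hα n)
    intro x hx
    exact ⟨hSmono ζ ζ' hζζ' n hx.1, hx.2⟩
  have hEX : ∀ ζ < ω1, ∃ g, StageProp f β (SSet top G ζ) g := by
    intro ζ hζ
    have hcnt : ∀ n : ℕ, ∃ gi : ULift.{u} ℕ → Ordinal.{u}, SSet top G ζ n ⊆ Set.range gi := by
      intro n
      have h2 : {y | ∃ ξ, ∃ _ : ξ < ζ, G ξ n = y} = (fun ξ => G ξ n) '' Set.Iio ζ := by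
        ext y
        simp only [Set.mem_setOf_eq, Set.mem_image, Set.mem_Iio]
        constructor
        · rintro ⟨ξ, hξ, rfl⟩; exact ⟨ξ, hξ, rfl⟩
        · rintro ⟨ξ, hξ, rfl⟩; exact ⟨ξ, hξ, rfl⟩
      have hIio : (Set.Iio ζ).Countable := by
        rw [← Set.countable_coe_iff, ← Cardinal.mk_le_aleph0_iff, Ordinal.mk_Iio_ordinal]
        have h3 : ζ.card ≤ ℵ₀ := by
          have := (Cardinal.lt_ord.mp (hζ.trans_le (le_of_eq rfl)))
          rw [← Cardinal.succ_aleph0] at this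
          exact Order.lt_succ_iff.mp this
        calc Cardinal.lift.{u+1} ζ.card ≤ Cardinal.lift.{u+1} ℵ₀ := Cardinal.lift_le.mpr h3
        _ = ℵ₀ := Cardinal.lift_aleph0
      have h4 : (SSet top G ζ n).Countable := by
        apply Set.Countable.insert
        rw [h2]
        exact hIio.image _
      obtain ⟨g0, hg0⟩ := h4.exists_eq_range ⟨top n, Set.mem_insert _ _⟩
      refine ⟨fun k => g0 k.down, ?_⟩
      intro x hx
      rw [hg0] at hx
      obtain ⟨k, rfl⟩ := hx
      exact ⟨ULift.up k, rfl⟩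
    obtain ⟨abar, habβ, hstab⟩ := stage_lemma hreg hun hβ hmono hlt hcf hcont hinc hβμ hη
      hstatη (SSet top G ζ) (hStop ζ) hcnt
    set h0 : ℕ → Ordinal.{u} := tProj f (SSet top G ζ) abar with hh0
    have hub : ∀ α < β, EvLT (f α) h0 := by
      intro α hα
      set α' := max (α + 1) abar with hα'
      have hα'β : α' < β := max_lt (hβlim.succ_lt hα) habβ
      have hαα' : α < α' := (lt_add_one α).trans_le (le_max_left _ _)
      have h5 : EvLT (f α) (f α') := hinc α α' hαα' (hα'β.trans hβμ)
      have h6 : {n | tProj f (SSet top G ζ) α' n ≠ tProj f (SSet top G ζ) abar n}.Finite :=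
        hstab α' (le_max_right _ _) hα'β
      apply (h5.union h6).subset
      intro n hn
      simp only [Set.mem_setOf_eq, Set.mem_union] at hn ⊢
      by_contra hcon
      push_neg at hcon
      have h7 : f α' n ≤ tProj f (SSet top G ζ) α' n := (csInf_mem (hSne ζ α' hα'β n)).2
      have h8 : tProj f (SSet top G ζ) α' n = h0 n := hcon.2
      exact hn ((hcon.1.trans_le h7).trans_le h8.le)
    obtain ⟨g, hg1, hg2⟩ := hno h0 hub
    exact ⟨g, abar, habβ, hstab, hg1, hg2⟩
  have hGspec : ∀ ζ, ζ < ω1 → ∃ a, a < β ∧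
      (∀ α, a ≤ α → α < β → {n | tProj f (SSet top G ζ) α n ≠ tProj f (SSet top G ζ) a n}.Finite) ∧
      EvLT (G ζ) (tProj f (SSet top G ζ) a) ∧ ∀ α < β, ¬ EvLT (G ζ) (f α) := by
    intro ζ hζ
    rw [hGeq ζ, dif_pos (hEX ζ hζ)]
    exact (hEX ζ hζ).choose_spec
  choose! asel ha1 ha2 ha3 ha4 using hGspec
  set adag := Ordinal.bsup ω1 (fun ζ _ => asel ζ) with hadag
  have hadagβ : adag < β := by
    apply Ordinal.bsup_lt_ord _ (fun ζ hζ => ha1 ζ hζ)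
    rw [Cardinal.card_ord, hβ]
    exact hlamℵ₁
  have hadagge : ∀ ζ, ζ < ω1 → asel ζ ≤ adag := fun ζ hζ => Ordinal.le_bsup _ ζ hζ
  have hdrop : ∀ ζ, ζ < ω1 → ∃ n : ℕ,
      tProj f (SSet top G (ζ+1)) adag n < tProj f (SSet top G ζ) adag n := by
    intro ζ hζ
    have h1 : {n | ¬ G ζ n < f adag n}.Infinite := ha4 ζ hζ adag hadagβ
    have h2 : {n | tProj f (SSet top G ζ) adag n ≠ tProj f (SSet top G ζ) (asel ζ) n}.Finite :=
      ha2 ζ hζ adag (hadagge ζ hζ) hadagβ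
    have h3 : {n | ¬ G ζ n < tProj f (SSet top G ζ) (asel ζ) n}.Finite := ha3 ζ hζ
    obtain ⟨n, hn⟩ := ((h1.diff h2).diff h3).nonempty
    simp only [Set.mem_diff, Set.mem_setOf_eq] at hn
    obtain ⟨⟨hn1, hn2⟩, hn3⟩ := hn
    have e1 : f adag n ≤ G ζ n := not_lt.mp hn1
    have e2 : G ζ n < tProj f (SSet top G ζ) (asel ζ) n := not_not.mp hn3
    have e3 : tProj f (SSet top G ζ) adag n = tProj f (SSet top G ζ) (asel ζ) n :=
      not_ne_iff.mp hn2
    refine ⟨n, ?_⟩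
    have e4 : tProj f (SSet top G (ζ+1)) adag n ≤ G ζ n := by
      apply csInf_le (OrderBot.bddBelow _)
      exact ⟨Or.inr ⟨ζ, lt_add_one ζ, rfl⟩, e1⟩
    rw [e3]
    exact e4.trans_lt e2
  choose! nsel hnsel using hdrop
  have hfib : ∀ n : ℕ, {ζ | ζ < ω1 ∧ nsel ζ = n}.Finite := by
    intro n
    apply finite_of_strictAnti (fun ζ => tProj f (SSet top G (ζ+1)) adag n)
    rintro ζ ⟨hζ, hζn⟩ ζ' ⟨hζ', hζ'n⟩ hlt'
    have d1 := hnsel ζ' hζ'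
    rw [hζ'n] at d1
    have hsucc : ζ + 1 ≤ ζ' := by
      rw [Ordinal.add_one_eq_succ]
      exact Order.succ_le_of_lt hlt'
    have d2 : tProj f (SSet top G ζ') adag n ≤ tProj f (SSet top G (ζ+1)) adag n :=
      htmono (ζ+1) ζ' hsucc adag hadagβ n
    exact d1.trans_le d2
  have hcover : Set.Iio ω1 ⊆ ⋃ n : ℕ, {ζ | ζ < ω1 ∧ nsel ζ = n} := by
    intro ζ hζ
    exact Set.mem_iUnion.mpr ⟨nsel ζ, hζ, rfl⟩
  have hcnt : (Set.Iio ω1).Countable :=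
    (Set.countable_iUnion (fun n => (hfib n).countable)).mono hcover
  obtain ⟨g0, hg0⟩ := hcnt.exists_eq_range ⟨0, hω1lim.pos⟩
  have hlt1 : sSup (Set.Iio ω1) < ω1 := by
    apply sSup_lt_ord_of_range (g := fun k : ULift.{u} ℕ => g0 k.down)
    · rw [Cardinal.mk_denumerable, hω1cof]; exact Cardinal.aleph0_lt_aleph_one
    · intro x hx
      rw [hg0] at hx
      obtain ⟨k, rfl⟩ := hx
      exact Or.inl ⟨ULift.up k, rfl⟩
    · exact fun x hx => hx
    · exact hω1lim.pos
  have hge1 : ω1 ≤ sSup (Set.Iio ω1) := by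
    apply le_of_forall_lt
    intro x hx
    have hmem : x + 1 ∈ Set.Iio ω1 := hω1lim.succ_lt hx
    exact (lt_add_one x).trans_le (le_csSup (Ordinal.bddAbove_of_small) hmem)
  exact absurd (hge1.trans_lt hlt1) (lt_irrefl _)

end EE

/-- a canonical cofinal subset of `h n` of size `cf (h n)` -/
def Cset (h : ℕ → Ordinal.{u}) (n : ℕ) : Set Ordinal.{u} :=
  {y | ∃ b, ∃ hb : b < (h n).cof.ord,
    (Ordinal.exists_fundamental_sequence (h n)).choose b hb = y}

lemma Cset_lt {h : ℕ → Ordinal.{u}} {n : ℕ} {y : Ordinal.{u}} (hy : y ∈ Cset h n) : y < h n := by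
  obtain ⟨b, hb, rfl⟩ := hy
  have hfs := (Ordinal.exists_fundamental_sequence (h n)).choose_spec
  have := Ordinal.lt_blsub (Ordinal.exists_fundamental_sequence (h n)).choose b hb
  rwa [hfs.blsub_eq] at this

lemma Cset_cof {h : ℕ → Ordinal.{u}} {n : ℕ} {x : Ordinal.{u}} (hx : x < h n) :
    ∃ y ∈ Cset h n, x ≤ y := by
  have hfs := (Ordinal.exists_fundamental_sequence (h n)).choose_spec
  have hx' : x < Ordinal.blsub _ (Ordinal.exists_fundamental_sequence (h n)).choose := by
    rwa [hfs.blsub_eq]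
  obtain ⟨b, hb, hle⟩ := Ordinal.lt_blsub_iff.mp hx'
  exact ⟨_, ⟨b, hb, rfl⟩, hle⟩

/-- enumeration of `Cset` by a `Type u` index of size `cf (h n)` -/
def CsetEnum (h : ℕ → Ordinal.{u}) (n : ℕ) : ((h n).cof.ord).ToType → Ordinal.{u} :=
  fun t => (Ordinal.exists_fundamental_sequence (h n)).choose
    ((Ordinal.ToType.mk).symm t).1 ((Ordinal.ToType.mk).symm t).2

lemma Cset_subset_range {h : ℕ → Ordinal.{u}} {n : ℕ} :
    Cset h n ⊆ Set.range (CsetEnum h n) := by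
  rintro y ⟨b, hb, rfl⟩
  refine ⟨(Ordinal.ToType.mk) ⟨b, hb⟩, ?_⟩
  have h1 : (Ordinal.ToType.mk (o := (h n).cof.ord)).symm ((Ordinal.ToType.mk) ⟨b, hb⟩)
      = ⟨b, hb⟩ := OrderIso.symm_apply_apply _ _
  exact congrArg (fun p : Set.Iio ((h n).cof.ord) =>
    (Ordinal.exists_fundamental_sequence (h n)).choose p.1 p.2) h1

lemma CsetEnum_card {h : ℕ → Ordinal.{u}} {n : ℕ} :
    #(((h n).cof.ord).ToType) = (h n).cof := by
  rw [Cardinal.mk_toType, Cardinal.card_ord]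

section KG
variable {β μ : Ordinal.{u}} {ηc : Cardinal.{u}} {f : Ordinal.{u} → ℕ → Ordinal.{u}}
  {h : ℕ → Ordinal.{u}}
  (hinc : ∀ α β', α < β' → β' < μ → EvLT (f α) (f β'))
  (hβμ : β < μ)
  (hub : ∀ α < β, EvLT (f α) h)
  (hηc : ℵ₀ < ηc) (hηreg : ηc.IsRegular)

include hinc hβμ hub hηc hηreg in
lemma key_gg {I' : Set ℕ} (hI' : ∀ n ∈ I', (h n).cof < ηc)
    {γ : Ordinal.{u}} (hγcof : γ.cof = ηc) (hγgood : IsGoodPt f γ) (hγβ : γ < β) :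
    ∃ gg : ℕ → Ordinal.{u},
      (∀ n : ℕ, gg n = 0 ∨ (n ∈ I' ∧ gg n ∈ Cset h n)) ∧
      (∀ ξ < γ, {n | n ∈ I' ∧ ¬ f ξ n < gg n}.Finite) := by
  classical
  obtain ⟨A, hA1, hA2, m, hA3⟩ := hγgood
  have hγlim : Order.IsSuccLimit γ := Ordinal.aleph0_le_cof.mp (by rw [hγcof]; exact hηc.le)
  set Λγ := γ.cof.ord with hΛγ
  have hΛγcof : Λγ.cof = ηc := by rw [hΛγ, hγcof]; exact hηreg.cof_eq
  have hΛγlim : Order.IsSuccLimit Λγ := by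
    rw [hΛγ, hγcof]; exact Cardinal.isSuccLimit_ord hηc.le
  obtain ⟨a, haA, hamono, hacof⟩ := exists_incr_cof hA1 hA2 (by rw [hγcof]; exact hηc.le)
  set Ed : Ordinal.{u} → Finset ℕ := fun d =>
    if hd : d < Λγ then (hub (a d) ((hA1 _ (haA d hd)).trans hγβ)).toFinset else ∅ with hEd
  obtain ⟨Estar, hEstar⟩ := pigeon_unbounded (by rw [hΛγcof]; exact hηc) Ed
  set J₁ : Set Ordinal.{u} := {d | d < Λγ ∧ Ed d = Estar} with hJ₁
  have hJ₁sub : ∀ d ∈ J₁, d < Λγ := fun d hd => hd.1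
  have hJ₁unb : ∀ x < Λγ, ∃ d ∈ J₁, x ≤ d := by
    intro x hx
    obtain ⟨d, h1, h2, h3⟩ := hEstar x hx
    exact ⟨d, ⟨h2, h3⟩, h1⟩
  have hfE : ∀ d ∈ J₁, ∀ n : ℕ, n ∉ Estar → f (a d) n < h n := by
    intro d hd n hn
    have h1 : Ed d = Estar := hd.2
    rw [hEd] at h1
    simp only [dif_pos hd.1] at h1
    rw [← h1] at hn
    by_contra hcon
    exact hn ((hub (a d) ((hA1 _ (haA d hd.1)).trans hγβ)).mem_toFinset.mpr hcon)
  set Gd : Ordinal.{u} → ℕ → Ordinal.{u} :=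
    fun d n => sInf {y ∈ Cset h n | f (a d) n ≤ y} with hGd
  have hGne : ∀ d ∈ J₁, ∀ n : ℕ, n ∉ Estar → {y ∈ Cset h n | f (a d) n ≤ y}.Nonempty := by
    intro d hd n hn
    obtain ⟨y, hy1, hy2⟩ := Cset_cof (hfE d hd n hn)
    exact ⟨y, hy1, hy2⟩
  have hGmem : ∀ d ∈ J₁, ∀ n : ℕ, n ∉ Estar →
      Gd d n ∈ Cset h n ∧ f (a d) n ≤ Gd d n := by
    intro d hd n hn
    exact csInf_mem (hGne d hd n hn)
  have hbn : ∀ n : ℕ, ∃ b, b ∈ J₁ ∧ ∀ d ∈ J₁, b ≤ d →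
      (n ∈ I' → n ∉ Estar → m ≤ n → Gd d n = Gd b n) := by
    intro n
    by_cases hcase : n ∈ I' ∧ n ∉ Estar ∧ m ≤ n
    · obtain ⟨hnI, hnE, hnm⟩ := hcase
      have hm' : ∀ d ∈ J₁, ∀ d' ∈ J₁, d ≤ d' → Gd d n ≤ Gd d' n := by
        intro d hd d' hd' hdd'
        have hle : f (a d) n ≤ f (a d') n := by
          rcases hdd'.lt_or_eq with hlt' | heq
          · exact ((hA3 n hnm) (haA d hd.1) (haA d' hd'.1)
              (hamono d d' hlt' hd'.1)).le
          · rw [heq]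
        apply csInf_le_csInf (OrderBot.bddBelow _) (hGne d' hd' n hnE)
        intro y hy
        exact ⟨hy.1, hle.trans hy.2⟩
      have hv : ∀ d ∈ J₁, Gd d n ∈ Set.range (CsetEnum h n) :=
        fun d hd => Cset_subset_range (hGmem d hd n hnE).1
      have hcard : #(((h n).cof.ord).ToType) < Λγ.cof := by
        rw [CsetEnum_card, hΛγcof]
        exact hI' n hnI
      obtain ⟨b, hbJ, hb⟩ := mono_stab hJ₁sub hJ₁unb (fun d => Gd d n) hm'
        (CsetEnum h n) hv hcard (by rw [hΛγcof]; exact hηc.le)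
      exact ⟨b, hbJ, fun d hd hbd _ _ _ => hb d hd hbd⟩
    · obtain ⟨b, hbJ, -⟩ := hJ₁unb 0 hΛγlim.pos
      refine ⟨b, hbJ, fun d hd hbd h1 h2 h3 => absurd (And.intro h1 (And.intro h2 h3)) hcase⟩
  choose bsel hbselJ hbspec using hbn
  obtain ⟨x, hxΛ, hxgt⟩ := exists_above_iSup_nat (by rw [hΛγcof]; exact hηc) bsel
    (fun k => hJ₁sub _ (hbselJ k))
  obtain ⟨d₀, hd₀J, hxd₀⟩ := hJ₁unb x hxΛ
  set gg : ℕ → Ordinal.{u} := fun n =>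
    if n ∈ I' ∧ n ∉ Estar ∧ m ≤ n then Gd d₀ n else 0 with hgg
  refine ⟨gg, ?_, ?_⟩
  · intro n
    by_cases hc : n ∈ I' ∧ n ∉ Estar ∧ m ≤ n
    · right
      refine ⟨hc.1, ?_⟩
      rw [hgg]; simp only [if_pos hc]
      exact (hGmem d₀ hd₀J n hc.2.1).1
    · left; rw [hgg]; simp only [if_neg hc]
  · intro ξ hξ
    obtain ⟨d₂, hd₂Λ, hd₂⟩ := hacof (ξ + 1) (hγlim.succ_lt hξ)
    have hmaxΛ : max d₀ d₂ < Λγ := max_lt (hJ₁sub _ hd₀J) hd₂Λ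
    obtain ⟨d₁, hd₁J, hd₁ge⟩ := hJ₁unb _ hmaxΛ
    have hξa : ξ < a d₁ := by
      have h1 : a d₂ ≤ a d₁ := by
        rcases ((le_max_right d₀ d₂).trans hd₁ge).lt_or_eq with hlt' | heq
        · exact (hamono d₂ d₁ hlt' (hJ₁sub _ hd₁J)).le
        · rw [heq]
      exact (lt_add_one ξ).trans_le (hd₂.trans h1)
    have hff : EvLT (f ξ) (f (a d₁)) :=
      hinc ξ (a d₁) hξa (((hA1 _ (haA d₁ (hJ₁sub _ hd₁J))).trans hγβ).trans hβμ)
    have hsub : {n | n ∈ I' ∧ ¬ f ξ n < gg n} ⊆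
        {n | ¬ f ξ n < f (a d₁) n} ∪ ↑Estar ∪ Set.Iio m := by
      rintro n ⟨hnI, hn⟩
      simp only [Set.mem_union, Set.mem_setOf_eq, Finset.coe_sort_coe, Set.mem_Iio,
        Finset.mem_coe]
      by_contra hcon
      push_neg at hcon
      obtain ⟨⟨h1, h2⟩, h3⟩ := hcon
      have h3' : m ≤ n := h3
      have h4 : f ξ n < f (a d₁) n := h1
      have h5 : f (a d₁) n ≤ Gd d₁ n := (hGmem d₁ hd₁J n h2).2
      have h6 : Gd d₁ n = Gd (bsel n) n :=
        hbspec n d₁ hd₁J (((hxgt n).trans_le hxd₀).le.trans ((le_max_left d₀ d₂).trans hd₁ge))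
          hnI h2 h3'
      have h7 : Gd d₀ n = Gd (bsel n) n :=
        hbspec n d₀ hd₀J ((hxgt n).trans_le hxd₀).le hnI h2 h3'
      have h8 : gg n = Gd d₀ n := by
        rw [hgg]; simp only [if_pos (And.intro hnI (And.intro h2 h3'))]
      exact hn (by rw [h8, h7, ← h6]; exact h4.trans_le h5)
    exact (((hff.union (Estar.finite_toSet)).union (Set.finite_Iio m)).subset hsub)

end KG

section EC
variable {β μ : Ordinal.{u}} {lam ηc : Cardinal.{u}} {s : Ordinal.{u} → Ordinal.{u}}
  {f : Ordinal.{u} → ℕ → Ordinal.{u}} {h : ℕ → Ordinal.{u}}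
  (hreg : lam.IsRegular) (hun : ℵ₀ < lam) (hβ : β.cof = lam)
  (hmono : ∀ i j, i < j → s i < s j) (hlt : ∀ i < lam.ord, s i < β)
  (hcf : ∀ x < β, ∃ i < lam.ord, x ≤ s i)
  (hcont : ∀ i, (∀ x < i, ∃ y, x < y ∧ y < i) → ∀ x < s i, ∃ j < i, x ≤ s j)
  (hinc : ∀ α β', α < β' → β' < μ → EvLT (f α) (f β'))
  (hβμ : β < μ) (hηc : ℵ₀ < ηc) (hηreg : ηc.IsRegular)
  (hstatc : ∀ C, IsClubIn C β → ∃ γ ∈ C, γ.cof = ηc ∧ IsGoodPt f γ)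
  (hub : ∀ α < β, EvLT (f α) h)
  (hex : ∀ g, EvLT g h → ∃ α < β, EvLT g (f α))

variable {γ0 : Ordinal.{u}} {A : Set Ordinal.{u}} {m : ℕ}

include hreg hun hβ hmono hlt hcf hcont hinc hβμ hηc hηreg hstatc hub hex in
lemma eub_cof : {n | (h n).cof < ηc}.Finite := by
  classical
  by_contra hIinf
  have hIinf : {n | (h n).cof < ηc}.Infinite := hIinf
  have hβlim : Order.IsSuccLimit β := Ordinal.aleph0_le_cof.mp (by rw [hβ]; exact hreg.1)
  set E0 : Set ℕ := {n | ¬ f 0 n < h n} with hE0def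
  have hE0 : E0.Finite := hub 0 hβlim.pos
  have hpos : ∀ n ∉ E0, 0 < h n := by
    intro n hn
    have : f 0 n < h n := not_not.mp (fun hc => hn hc)
    exact (zero_le (a := _)).trans_lt this
  set I' : Set ℕ := {n | (h n).cof < ηc} \ E0 with hI'def
  have hI'inf : I'.Infinite := hIinf.diff hE0
  have hI' : ∀ n ∈ I', (h n).cof < ηc := fun n hn => hn.1
  -- unboundedly many good points of cofinality ηc
  have hPunb : ∀ x < β, ∃ γ, (γ.cof = ηc ∧ IsGoodPt f γ) ∧ x < γ ∧ γ < β := by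
    intro x hx
    have hclub : IsClubIn {y | x < y ∧ y < β} β := by
      refine ⟨fun y hy => hy.2, ?_, ?_⟩
      · intro z hz
        exact ⟨max z x + 1, ⟨(le_max_right z x).trans_lt (lt_add_one _),
          hβlim.succ_lt (max_lt hz hx)⟩, (le_max_left z x).trans (lt_add_one _).le⟩
      · intro Y hY hYne hYlt
        obtain ⟨y, hy⟩ := hYne
        have hbdd : BddAbove Y := by
          have : Small.{u} Y := small_subset (show Y ⊆ Set.Iio β from fun z hz => (hY hz).2)
          exact Ordinal.bddAbove_of_small
        exact ⟨(hY hy).1.trans_le (le_csSup hbdd hy), hYlt⟩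
    obtain ⟨γ, hγC, hγ⟩ := hstatc _ hclub
    exact ⟨γ, hγ, hγC.1, hγC.2⟩
  -- choose good points, witnesses and catching indices
  have hch : ∀ i < lam.ord, ∃ γ, ∃ gg : ℕ → Ordinal.{u}, ∃ α',
      ((γ.cof = ηc ∧ IsGoodPt f γ) ∧ s i < γ ∧ γ < β) ∧
      (∀ n : ℕ, gg n = 0 ∨ (n ∈ I' ∧ gg n ∈ Cset h n)) ∧
      (∀ ξ < γ, {n | n ∈ I' ∧ ¬ f ξ n < gg n}.Finite) ∧ α' < β ∧ EvLT gg (f α') := by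
    intro i hi
    obtain ⟨γ, hγP, hγgt, hγβ⟩ := hPunb (s i) (hlt i hi)
    obtain ⟨gg, hgg1, hgg2⟩ := key_gg hinc hβμ hub hηc hηreg hI' hγP.1 hγP.2 hγβ
    have hggh : EvLT gg h := by
      apply hE0.subset
      intro n hn
      simp only [Set.mem_setOf_eq] at hn
      by_contra hnE0
      rcases hgg1 n with h0 | ⟨hnI, hmem⟩
      · exact hn (h0 ▸ hpos n hnE0)
      · exact hn (Cset_lt hmem)
    obtain ⟨α', hα'β, hα'⟩ := hex gg hggh
    exact ⟨γ, gg, α', ⟨hγP, hγgt, hγβ⟩, hgg1, hgg2, hα'β, hα'⟩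
  choose! γch ggch αch hch1 hch2 hch3 hch4 hch5 using hch
  -- closure function
  have hFex : ∀ i < lam.ord, ∃ j, j < lam.ord ∧ max (γch i) (αch i) < s j := by
    intro i hi
    have hmax : max (γch i) (αch i) + 1 < β :=
      hβlim.succ_lt (max_lt (hch1 i hi).2.2 (hch4 i hi))
    obtain ⟨j, hj, hle⟩ := hcf _ hmax
    exact ⟨j, hj, (lt_add_one _).trans_le hle⟩
  set F : Ordinal.{u} → Ordinal.{u} := fun i =>
    if hi : i < lam.ord then (hFex i hi).choose else 0 with hF
  have hFlt : ∀ i < lam.ord, F i < lam.ord := by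
    intro i hi; rw [hF]; simp only [dif_pos hi]; exact (hFex i hi).choose_spec.1
  have hFspec : ∀ i < lam.ord, max (γch i) (αch i) < s (F i) := by
    intro i hi; rw [hF]; simp only [dif_pos hi]; exact (hFex i hi).choose_spec.2
  obtain ⟨C, hC, hCspec⟩ := club_from_F hreg hun hβ hmono hlt hcf hcont F hFlt 0
    (Cardinal.isSuccLimit_ord hreg.1).pos
  obtain ⟨Δ, hΔC, hΔcof, hΔgood⟩ := hstatc C hC
  obtain ⟨i, hiΛ, hΔeq, hi0, hFcl, hpre⟩ := hCspec Δ hΔC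
  subst hΔeq
  obtain ⟨AΔ, hAΔ1, hAΔ2, mΔ, hAΔ3⟩ := hΔgood
  have hΔβ : s i < β := hlt i hiΛ
  have hΔμ : s i < μ := hΔβ.trans hβμ
  have hΔlim : Order.IsSuccLimit (s i) := Ordinal.aleph0_le_cof.mp (by rw [hΔcof]; exact hηc.le)
  have hU1 : ∀ i' < i, γch i' < s i := by
    intro i' hi'
    calc γch i' ≤ max (γch i') (αch i') := le_max_left _ _
    _ < s (F i') := hFspec i' (hi'.trans hiΛ)
    _ < s i := hmono _ _ (hFcl i' hi')
  have hU2 : ∀ i' < i, αch i' < s i := by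
    intro i' hi'
    calc αch i' ≤ max (γch i') (αch i') := le_max_right _ _
    _ < s (F i') := hFspec i' (hi'.trans hiΛ)
    _ < s i := hmono _ _ (hFcl i' hi')
  have hUcof : ∀ x < s i, ∃ i' < i, x ≤ γch i' := by
    intro x hx
    obtain ⟨j, hj, hxj⟩ := hcont i hpre x hx
    exact ⟨j, hj, hxj.trans (hch1 j (hj.trans hiΛ)).2.1.le⟩
  -- increasing cofinal sequence of chosen good points below Δ
  set AU : Set Ordinal.{u} := {y | ∃ i', i' < i ∧ y = γch i'} with hAU
  have hAU1 : ∀ y ∈ AU, y < s i := by rintro y ⟨i', hi', rfl⟩; exact hU1 i' hi'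
  have hAU2 : ∀ x < s i, ∃ y ∈ AU, x ≤ y := by
    intro x hx
    obtain ⟨i', hi', hle⟩ := hUcof x hx
    exact ⟨γch i', ⟨i', hi', rfl⟩, hle⟩
  obtain ⟨e, heA, hemono, hecof⟩ := exists_incr_cof hAU1 hAU2 (by rw [hΔcof]; exact hηc.le)
  set ΛΔ := (s i).cof.ord with hΛΔ
  have hΛΔcof : ΛΔ.cof = ηc := by rw [hΛΔ, hΔcof]; exact hηreg.cof_eq
  have hΛΔlim : Order.IsSuccLimit ΛΔ := by rw [hΛΔ, hΔcof]; exact Cardinal.isSuccLimit_ord hηc.le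
  have hesel : ∀ d, d < ΛΔ → ∃ i', i' < i ∧ e d = γch i' := by
    intro d hd
    obtain ⟨i', hi', heq⟩ := heA d hd
    exact ⟨i', hi', heq⟩
  choose! isel hisel1 hisel2 using hesel
  set gfun : Ordinal.{u} → ℕ → Ordinal.{u} := fun d =>
    if hd : d < ΛΔ then ggch (isel d) else fun _ => 0 with hgfun
  -- pigeonhole for the exception sets
  set ED2 : Ordinal.{u} → Finset ℕ := fun d =>
    if hd : d < ΛΔ then
      ((hch5 (isel d) ((hisel1 d hd).trans hiΛ)).union
        (gsup_ub hinc hΔμ hAΔ1 hAΔ2 hΔcof hηc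
          (hU2 (isel d) (hisel1 d hd)) (α := αch (isel d)))).toFinset
    else ∅ with hED2
  obtain ⟨E2star, hE2star⟩ := pigeon_unbounded (by rw [hΛΔcof]; exact hηc) ED2
  set J₂ : Set Ordinal.{u} := {d | d < ΛΔ ∧ ED2 d = E2star} with hJ₂
  have hJ₂sub : ∀ d ∈ J₂, d < ΛΔ := fun d hd => hd.1
  have hJ₂unb : ∀ x < ΛΔ, ∃ d ∈ J₂, x ≤ d := by
    intro x hx
    obtain ⟨d, h1, h2, h3⟩ := hE2star x hx
    exact ⟨d, ⟨h2, h3⟩, h1⟩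
  have hJ₂ne : J₂.Nonempty := by
    obtain ⟨d, hd, -⟩ := hJ₂unb 0 hΛΔlim.pos
    exact ⟨d, hd⟩
  have hJ₂lt : ∀ d ∈ J₂, ∀ n : ℕ, n ∉ E2star → gfun d n < gsup f AΔ n := by
    intro d hd n hn
    have h1 : ED2 d = E2star := hd.2
    rw [hED2] at h1
    simp only [dif_pos hd.1] at h1
    rw [← h1, Set.Finite.mem_toFinset] at hn
    have h2 : ggch (isel d) n < f (αch (isel d)) n :=
      not_not.mp (fun hc => hn (Set.mem_union_left _ hc))
    have h3 : f (αch (isel d)) n < gsup f AΔ n :=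
      not_not.mp (fun hc => hn (Set.mem_union_right _ hc))
    rw [hgfun]; simp only [dif_pos hd.1]
    exact h2.trans h3
  set ghat : ℕ → Ordinal.{u} := fun n =>
    if n ∉ E2star ∧ mΔ ≤ n then sSup ((fun d => gfun d n) '' J₂) else 0 with hghat
  have hghatΔ : EvLT ghat (gsup f AΔ) := by
    apply ((E2star.finite_toSet).union (Set.finite_Iio mΔ)).subset
    intro n hn
    simp only [Set.mem_setOf_eq] at hn
    simp only [Set.mem_union, Finset.mem_coe, Set.mem_Iio]
    by_contra hcon
    push_neg at hcon
    obtain ⟨hnE2, hnm⟩ := hcon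
    have hnm' : mΔ ≤ n := hnm
    have hif : ghat n = sSup ((fun d => gfun d n) '' J₂) := by
      rw [hghat]; simp only [if_pos (And.intro hnE2 hnm')]
    apply hn
    rw [hif]
    by_cases hnI : (h n).cof < ηc
    · apply sSup_lt_ord_of_range (g := CsetEnum h n)
      · rw [CsetEnum_card]
        exact hnI.trans_le (gsup_cof hAΔ1 hAΔ2 hAΔ3 hΔcof hηc hnm')
      · rintro y ⟨d, hdJ, rfl⟩
        show gfun d n ∈ Set.range (CsetEnum h n) ∪ {0}
        by_cases hdΛ : d < ΛΔ
        · have heq2 : gfun d n = ggch (isel d) n := by rw [hgfun]; simp only [dif_pos hdΛ]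
          rw [heq2]
          rcases hch2 (isel d) ((hisel1 d hdΛ).trans hiΛ) n with h0 | ⟨-, hmem⟩
          · rw [h0]; exact Or.inr rfl
          · exact Or.inl (Cset_subset_range hmem)
        · have heq2 : gfun d n = 0 := by rw [hgfun]; simp only [dif_neg hdΛ]
          rw [heq2]; exact Or.inr rfl
      · rintro y ⟨d, hdJ, rfl⟩
        show gfun d n < gsup f AΔ n
        exact hJ₂lt d hdJ n hnE2
      · exact gsup_pos hAΔ1 hAΔ2 hAΔ3 hΔcof hηc hnm'
    · have hall : ∀ d ∈ J₂, gfun d n = 0 := by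
        intro d hd
        by_cases hdΛ : d < ΛΔ
        · have heq : gfun d n = ggch (isel d) n := by rw [hgfun]; simp only [dif_pos hdΛ]
          rcases hch2 (isel d) ((hisel1 d hdΛ).trans hiΛ) n with h0 | ⟨hnI', -⟩
          · rw [heq, h0]
          · exact absurd (hI' n hnI') hnI
        · rw [hgfun]; simp only [dif_neg hdΛ]
      have hsub : ((fun d => gfun d n) '' J₂) ⊆ {0} := by
        rintro y ⟨d, hd, rfl⟩
        show gfun d n ∈ ({0} : Set Ordinal.{u})
        exact hall d hd
      have hle : sSup ((fun d => gfun d n) '' J₂) ≤ 0 := by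
        apply csSup_le (hJ₂ne.image _)
        intro y hy
        exact (hsub hy).le
      exact hle.trans_lt (gsup_pos hAΔ1 hAΔ2 hAΔ3 hΔcof hηc hnm')
  obtain ⟨ξhat, hξhatΔ, hξhat⟩ := gsup_exact hAΔ1 hAΔ2 hAΔ3 hΔcof hηc ghat hghatΔ
  obtain ⟨d₂, hd₂Λ, hd₂⟩ := hecof (ξhat + 1) (hΔlim.succ_lt hξhatΔ)
  obtain ⟨d, hdJ₂, hdge⟩ := hJ₂unb d₂ hd₂Λ
  have hdΛ : d < ΛΔ := hJ₂sub d hdJ₂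
  have hξed : ξhat < e d := by
    have h1 : e d₂ ≤ e d := by
      rcases hdge.lt_or_eq with hlt' | heq
      · exact (hemono d₂ d hlt' hdΛ).le
      · rw [heq]
    exact (lt_add_one ξhat).trans_le (hd₂.trans h1)
  have hGGc : {n | n ∈ I' ∧ ¬ f ξhat n < ggch (isel d) n}.Finite :=
    hch3 (isel d) ((hisel1 d hdΛ).trans hiΛ) ξhat (by rw [← hisel2 d hdΛ]; exact hξed)
  -- final contradiction
  have hfin : (↑E2star ∪ Set.Iio mΔ ∪ {n | ¬ ghat n < f ξhat n} ∪
      {n | n ∈ I' ∧ ¬ f ξhat n < ggch (isel d) n} : Set ℕ).Finite :=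
    ((((E2star.finite_toSet).union (Set.finite_Iio mΔ)).union hξhat).union hGGc)
  obtain ⟨n, hnI', hnex⟩ := (hI'inf.diff hfin).nonempty
  simp only [Set.mem_union, Finset.mem_coe, Set.mem_Iio, Set.mem_setOf_eq, not_or] at hnex
  obtain ⟨⟨⟨hn1, hn2⟩, hn3⟩, hn4⟩ := hnex
  have c1 : ghat n < f ξhat n := not_not.mp hn3
  have c2 : f ξhat n < ggch (isel d) n := by
    by_contra hcc
    exact hn4 ⟨hnI', hcc⟩
  have c3 : gfun d n = ggch (isel d) n := by rw [hgfun]; simp only [dif_pos hdΛ]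
  have c4 : gfun d n ≤ sSup ((fun d => gfun d n) '' J₂) := by
    exact le_csSup (bddAbove_image_of_lt hJ₂sub _) ⟨d, hdJ₂, rfl⟩
  have c5 : ghat n = sSup ((fun d => gfun d n) '' J₂) := by
    rw [hghat]; simp only [if_pos (And.intro hn1 (not_lt.mp hn2))]
  have : ghat n < ghat n := by
    calc ghat n < f ξhat n := c1
    _ < ggch (isel d) n := c2
    _ = gfun d n := c3.symm
    _ ≤ _ := c4
    _ = ghat n := c5.symm
  exact absurd this (lt_irrefl _)

end EC

end EubAux

/-- For a scale of length `μ > κ⁺` (`μ` regular) in `∏ n, κn n` and `β < μ` with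
`cf β = κ⁺`: if for unboundedly many regular `η < κ` the set of good points below `β` of
cofinality `η` is stationary in `β`, then there is an exact upper bound `h` for the scale
below `β` with `cf (h n) → κ`. -/
theorem exists_eub_of_stationarily_many_good (κ : Cardinal.{u})
    (hκ : ℵ₀ < κ) (hcof : κ.ord.cof = ℵ₀)
    (κn : ℕ → Cardinal.{u}) (hreg : ∀ n, (κn n).IsRegular) (hmono : StrictMono κn)
    (hlt : ∀ n, κn n < κ) (hcofinal : ∀ c < κ, ∃ n, c ≤ κn n)
    (μ : Cardinal.{u}) (hμreg : μ.IsRegular) (hκμ : Order.succ κ < μ)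
    (f : Ordinal.{u} → ℕ → Ordinal.{u}) (hscale : IsScale κn μ.ord f)
    (β : Ordinal.{u}) (hβ : β < μ.ord) (hβcof : β.cof = Order.succ κ)
    (hstat : ∀ η₀ < κ, ∃ η : Cardinal.{u}, η₀ ≤ η ∧ η < κ ∧ η.IsRegular ∧
      ∀ C : Set Ordinal.{u}, IsClubIn C β → ∃ γ ∈ C, γ.cof = η ∧ IsGoodPt f γ) :
    ∃ h : ℕ → Ordinal.{u}, IsEub f β h ∧ ∀ η < κ, {n | (h n).cof < η}.Finite := by
  classical
  have hinc' : ∀ α β', α < β' → β' < μ.ord → EvLT (f α) (f β') := hscale.2.1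
  have hκℵ₀ : ℵ₀ ≤ κ := hκ.le
  have hlamreg : (Order.succ κ).IsRegular := Cardinal.isRegular_succ hκℵ₀
  have hℵ₁κ : ℵ₁ ≤ κ := by rw [← Cardinal.succ_aleph0]; exact Order.succ_le_of_lt hκ
  have hun : ℵ₀ < Order.succ κ := hκ.trans (Order.lt_succ κ)
  have hlamℵ₁ : ℵ₁ < Order.succ κ := hℵ₁κ.trans_lt (Order.lt_succ κ)
  have hℵ₁κs : ℵ₁ < κ := by
    rcases hℵ₁κ.lt_or_eq with hcase | hcase
    · exact hcase
    · exfalso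
      rw [← hcase] at hcof
      rw [Cardinal.isRegular_aleph_one.cof_eq] at hcof
      exact absurd hcof.symm Cardinal.aleph0_lt_aleph_one.ne
  obtain ⟨s, hsmono, hslt, hscf, hscont⟩ := EubAux.exists_s hlamreg hβcof
  obtain ⟨η, hηge, hηκ, hηreg, hηstat⟩ := hstat ℵ₁ hℵ₁κs
  have hηℵ₀ : ℵ₀ < η := Cardinal.aleph0_lt_aleph_one.trans_le hηge
  obtain ⟨h, hub, hex⟩ := EubAux.exists_eub hlamreg hun hβcof hsmono hslt hscf hscont hinc'
    hβ hηℵ₀ hηstat hlamℵ₁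
  refine ⟨h, ⟨hub, hex⟩, ?_⟩
  intro η' hη'
  have hmaxκ : max η' ℵ₁ < κ := max_lt hη' hℵ₁κs
  obtain ⟨ηc, hηcge, hηcκ, hηcreg, hηcstat⟩ := hstat _ hmaxκ
  have hηcℵ₀ : ℵ₀ < ηc :=
    Cardinal.aleph0_lt_aleph_one.trans_le ((le_max_right _ _).trans hηcge)
  have hfin := EubAux.eub_cof hlamreg hun hβcof hsmono hslt hscf hscont hinc' hβ hηcℵ₀
    hηcreg hηcstat hub hex
  apply hfin.subset
  intro n hn
  exact hn.trans_le ((le_max_left _ _).trans hηcge)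
end
end

section
/- Let κ be a singular cardinal. Then there is a sequence (𝒞_α), indexed by limit ordinals α < κ⁺, such that: each 𝒞_α is a family of club subsets of α, each of order type less than κ, with 1 ≤ |𝒞_α| ≤ κ⁺; and for all C ∈ 𝒞_α and all β ∈ lim(C), C ∩ β ∈ 𝒞_β. -/
open Cardinal Set

universe u v

noncomputable section

/-- The order type of a set of ordinals. -/
def otype (X : Set Ordinal.{u}) : Ordinal.{u + 1} :=
  Ordinal.type ((· < ·) : X → X → Prop)

/-- From any `a < sSup X` we can find an element of `X` above `a`. -/
theorem lt_sSup_aux {X : Set Ordinal.{u}} {a : Ordinal.{u}} (h : a < sSup X) :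
    ∃ x ∈ X, a < x := by
  by_contra h'
  push_neg at h'
  exact absurd (csSup_le' h') (not_le.2 h)

/-- There is a small unbounded subset of any limit ordinal. -/
theorem exists_small_unbounded (γ : Ordinal.{u}) (hγ : Order.IsSuccLimit γ) :
    ∃ S : Set Ordinal.{u}, (∀ x ∈ S, x < γ) ∧ (∀ β < γ, ∃ c ∈ S, β ≤ c) ∧
      Cardinal.mk S ≤ Cardinal.lift.{u + 1, u} γ.cof := by
  obtain ⟨ι, f, hl, hc⟩ := Ordinal.exists_lsub_cof γ
  refine ⟨Set.range f, ?_, ?_, ?_⟩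
  · rintro x ⟨i, rfl⟩
    rw [← hl]
    exact Ordinal.lt_lsub f i
  · intro β hβ
    rw [← hl, Ordinal.lt_lsub_iff] at hβ
    obtain ⟨i, hi⟩ := hβ
    exact ⟨f i, Set.mem_range_self i, hi⟩
  · rw [← hc]
    have h := mk_range_le_lift (f := f)
    rwa [Cardinal.lift_id'.{u, u + 1}] at h

open Classical in
/-- The basic club we attach to each limit ordinal: a small unbounded set together with
its limit points. -/
def Dset (γ : Ordinal.{u}) : Set Ordinal.{u} :=
  if h : Order.IsSuccLimit γ then
    (exists_small_unbounded γ h).choose ∪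
      (limPts (exists_small_unbounded γ h).choose ∩ Set.Iio γ)
  else ∅

theorem Dset_spec (γ : Ordinal.{u}) (hγ : Order.IsSuccLimit γ) :
    (∀ x ∈ Dset γ, x < γ) ∧ (∀ β < γ, ∃ c ∈ Dset γ, β ≤ c) ∧
      (∀ Y ⊆ Dset γ, Y.Nonempty → sSup Y < γ → sSup Y ∈ Dset γ) ∧
      #(Dset γ) ≤ Cardinal.lift.{u + 1, u} γ.cof := by
  have hD : Dset γ = (exists_small_unbounded γ hγ).choose ∪
      (limPts (exists_small_unbounded γ hγ).choose ∩ Set.Iio γ) := by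
    unfold Dset
    rw [dif_pos hγ]
  set S := (exists_small_unbounded γ hγ).choose with hS
  obtain ⟨hSb, hSu, hSc⟩ := (exists_small_unbounded γ hγ).choose_spec
  have hDb : ∀ x ∈ Dset γ, x < γ := by
    rw [hD]
    rintro x (hx | ⟨-, hx⟩)
    · exact hSb x hx
    · exact hx
  refine ⟨hDb, ?_, ?_, ?_⟩
  · intro β hβ
    obtain ⟨c, hc, hbc⟩ := hSu β hβ
    exact ⟨c, hD ▸ Or.inl hc, hbc⟩
  · -- closedness
    intro Y hY hne hs
    rcases em (sSup Y ∈ Y) with hmem | hmem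
    · exact hY hmem
    · rw [hD]
      refine Or.inr ⟨⟨?_, ?_⟩, hs⟩
      · -- 0 < sSup Y
        obtain ⟨y0, hy0⟩ := hne
        have hb : BddAbove Y := ⟨γ, fun y hy => (hDb y (hY hy)).le⟩
        have h1 : y0 ≤ sSup Y := le_csSup hb hy0
        have h2 : y0 ≠ sSup Y := fun h => hmem (h ▸ hy0)
        exact lt_of_le_of_lt (zero_le (a := y0)) (h1.lt_of_ne h2)
      · -- sSup (S ∩ Iio (sSup Y)) = sSup Y
        have key : ∀ β < sSup Y, ∃ x ∈ S ∩ Set.Iio (sSup Y), β < x := by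
          intro β hβ
          obtain ⟨y, hyY, hβy⟩ := lt_sSup_aux hβ
          have hb : BddAbove Y := ⟨γ, fun y hy => (hDb y (hY hy)).le⟩
          have hys : y < sSup Y :=
            (le_csSup hb hyY).lt_of_ne (fun h => hmem (h ▸ hyY))
          have := hY hyY
          rw [hD] at this
          rcases this with hyS | ⟨⟨-, hlim⟩, -⟩
          · exact ⟨y, ⟨hyS, hys⟩, hβy⟩
          · obtain ⟨x, ⟨hxS, hxy⟩, hβx⟩ := lt_sSup_aux (a := β) (hlim ▸ hβy)
            exact ⟨x, ⟨hxS, hxy.trans hys⟩, hβx⟩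
        apply le_antisymm
        · exact csSup_le' (fun x hx => hx.2.le)
        · by_contra h
          push_neg at h
          obtain ⟨x, hx, hlt⟩ := key _ h
          have hb : BddAbove (S ∩ Set.Iio (sSup Y)) :=
            ⟨sSup Y, fun z hz => hz.2.le⟩
          exact absurd (le_csSup hb hx) (not_le.2 hlt)
  · -- cardinality
    have hTS : #(limPts S ∩ Set.Iio γ : Set Ordinal.{u}) ≤ #S := by
      set g : Ordinal.{u} → Ordinal.{u} := fun β => sInf {x | x ∈ S ∧ β ≤ x} with hg
      have hgm : ∀ β ∈ limPts S ∩ Set.Iio γ, g β ∈ S ∧ β ≤ g β := by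
        intro β hβ
        have hne : {x | x ∈ S ∧ β ≤ x}.Nonempty := by
          obtain ⟨c, hc, hbc⟩ := hSu β hβ.2
          exact ⟨c, hc, hbc⟩
        exact csInf_mem hne
      have hmono : ∀ β ∈ limPts S ∩ Set.Iio γ, ∀ β' ∈ limPts S ∩ Set.Iio γ,
          β < β' → g β < g β' := by
        intro β hβ β' hβ' hlt
        obtain ⟨x, ⟨hxS, hxβ'⟩, hβx⟩ := lt_sSup_aux (a := β) (hβ'.1.2 ▸ hlt)
        have h1 : g β ≤ x := csInf_le (OrderBot.bddBelow _) ⟨hxS, hβx.le⟩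
        exact lt_of_le_of_lt h1 (lt_of_lt_of_le hxβ' (hgm β' hβ').2)
      refine mk_le_of_injective
        (f := fun β : (limPts S ∩ Set.Iio γ : Set Ordinal.{u}) =>
          (⟨g β, (hgm β β.2).1⟩ : S)) ?_
      intro β β' hEq
      have : g β = g β' := congrArg Subtype.val hEq
      rcases lt_trichotomy (β : Ordinal.{u}) (β' : Ordinal.{u}) with h | h | h
      · exact absurd this (ne_of_lt (hmono _ β.2 _ β'.2 h))
      · exact Subtype.ext h
      · exact absurd this.symm (ne_of_lt (hmono _ β'.2 _ β.2 h))
    have hcof : ℵ₀ ≤ Cardinal.lift.{u + 1, u} γ.cof := by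
      rw [← Cardinal.lift_aleph0.{u + 1, u}, Cardinal.lift_le]
      exact Ordinal.aleph0_le_cof.2 hγ
    calc #(Dset γ) ≤ #S + #(limPts S ∩ Set.Iio γ : Set Ordinal.{u}) := by
          rw [hD]; exact mk_union_le _ _
      _ ≤ Cardinal.lift.{u + 1, u} γ.cof + Cardinal.lift.{u + 1, u} γ.cof :=
          add_le_add hSc (hTS.trans hSc)
      _ = Cardinal.lift.{u + 1, u} γ.cof := Cardinal.add_eq_self hcof

/-- If `κ` is a singular cardinal then there is a "silly square" sequence: for each limit
`α < κ⁺` a nonempty family `𝒞 α` of at most `κ⁺` many club subsets of `α` of order type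
less than `κ`, such that `C ∩ β ∈ 𝒞 β` for every `C ∈ 𝒞 α` and every limit point `β`
of `C`. -/
theorem exists_silly_square (κ : Cardinal.{u}) (hκ : ℵ₀ ≤ κ) (hsing : κ.ord.cof < κ) :
    ∃ 𝒞 : Ordinal.{u} → Set (Set Ordinal.{u}),
      ∀ α, α < (Order.succ κ).ord → Order.IsSuccLimit α →
        (𝒞 α).Nonempty ∧ #(𝒞 α) ≤ Cardinal.lift.{u + 1, u} (Order.succ κ) ∧
          (∀ C ∈ 𝒞 α, IsClubIn C α ∧ otype C < Ordinal.lift.{u + 1, u} κ.ord) ∧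
          (∀ C ∈ 𝒞 α, ∀ β ∈ limPts C, C ∩ Set.Iio β ∈ 𝒞 β) := by
  -- the coherent family: all restrictions of the basic clubs to their limit points
  refine ⟨fun α => {X | ∃ γ : Ordinal.{u}, γ < (Order.succ κ).ord ∧ Order.IsSuccLimit γ ∧
      α ∈ limPts (Dset γ) ∧ X = Dset γ ∩ Set.Iio α}, ?_⟩
  intro α hα hαlim
  -- cofinalities of small limit ordinals are < κ
  have hcof_lt : ∀ γ : Ordinal.{u}, γ < (Order.succ κ).ord → Order.IsSuccLimit γ → γ.cof < κ := by
    intro γ hγ hγlim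
    have h1 : γ.cof ≤ κ := by
      have := (Cardinal.lt_ord.1 hγ)
      exact (Ordinal.cof_le_card γ).trans (Order.lt_succ_iff.1 this)
    rcases h1.lt_or_eq with h | h
    · exact h
    · exfalso
      have hreg := Cardinal.isRegular_cof hγlim
      rw [h] at hreg
      exact absurd hreg.2 (not_le.2 hsing)
  constructor
  · -- nonempty: Dset α works
    obtain ⟨hDb, hDu, hDc, hDcard⟩ := Dset_spec α hαlim
    have hsub : Dset α ⊆ Set.Iio α := fun x hx => hDb x hx
    have hinter : Dset α ∩ Set.Iio α = Dset α := inter_eq_self_of_subset_left hsub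
    have hsup : sSup (Dset α) = α := by
      apply le_antisymm
      · exact csSup_le' (fun x hx => (hDb x hx).le)
      · by_contra h
        push_neg at h
        obtain ⟨c, hc, hbc⟩ := hDu _ (hαlim.succ_lt h)
        have : c ≤ sSup (Dset α) := le_csSup ⟨α, fun x hx => (hDb x hx).le⟩ hc
        exact absurd ((Order.lt_succ _).trans_le hbc) (not_lt.2 this)
    exact ⟨Dset α ∩ Set.Iio α, α, hα, hαlim, ⟨hαlim.pos, by rw [hinter, hsup]⟩, rfl⟩
  refine ⟨?_, ?_, ?_⟩
  · -- cardinality of the family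
    have hsub : {X | ∃ γ : Ordinal.{u}, γ < (Order.succ κ).ord ∧ Order.IsSuccLimit γ ∧
        α ∈ limPts (Dset γ) ∧ X = Dset γ ∩ Set.Iio α} ⊆
        (fun γ : Ordinal.{u} => Dset γ ∩ Set.Iio α) '' (Set.Iio ((Order.succ κ).ord)) := by
      rintro X ⟨γ, hγ, -, -, rfl⟩
      exact ⟨γ, hγ, rfl⟩
    calc #{X | ∃ γ : Ordinal.{u}, γ < (Order.succ κ).ord ∧ Order.IsSuccLimit γ ∧
          α ∈ limPts (Dset γ) ∧ X = Dset γ ∩ Set.Iio α}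
        ≤ #((fun γ : Ordinal.{u} => Dset γ ∩ Set.Iio α) '' (Set.Iio ((Order.succ κ).ord))) :=
          mk_le_mk_of_subset hsub
      _ ≤ #(Set.Iio ((Order.succ κ).ord)) := mk_image_le
      _ = Cardinal.lift.{u + 1, u} (Order.succ κ) := by
          rw [Ordinal.mk_Iio_ordinal, Cardinal.card_ord]
  · -- club and order type
    rintro C ⟨γ, hγ, hγlim, hαγ, rfl⟩
    obtain ⟨hDb, hDu, hDc, hDcard⟩ := Dset_spec γ hγlim
    have hαγle : α ≤ γ := by
      rw [← hαγ.2]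
      exact csSup_le' (fun x hx => (hDb x hx.1).le)
    constructor
    · refine ⟨fun β hβ => hβ.2, ?_, ?_⟩
      · intro β hβ
        obtain ⟨c, hc, hβc⟩ := lt_sSup_aux (hαγ.2 ▸ hβ)
        exact ⟨c, hc, hβc.le⟩
      · intro Y hY hne hs
        exact ⟨hDc Y (fun y hy => (hY hy).1) hne (hs.trans_le hαγle), hs⟩
    · -- order type
      have hcard : #(Dset γ ∩ Set.Iio α : Set Ordinal.{u}) < Cardinal.lift.{u + 1, u} κ := by
        refine lt_of_le_of_lt ((mk_le_mk_of_subset inter_subset_left).trans hDcard) ?_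
        rw [Cardinal.lift_lt]
        exact hcof_lt γ hγ hγlim
      rw [Cardinal.lift_ord, Cardinal.lt_ord]
      rwa [otype, Ordinal.card_type]
  · -- coherence
    rintro C ⟨γ, hγ, hγlim, hαγ, rfl⟩ β hβ
    have hβα : β ≤ α := by
      rw [← hβ.2]
      exact csSup_le' (fun x hx => hx.1.2.le)
    have hset : (Dset γ ∩ Set.Iio α) ∩ Set.Iio β = Dset γ ∩ Set.Iio β := by
      ext x
      constructor
      · rintro ⟨⟨h1, -⟩, h3⟩
        exact ⟨h1, h3⟩
      · rintro ⟨h1, h3⟩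
        exact ⟨⟨h1, h3.trans_le hβα⟩, h3⟩
    exact ⟨γ, hγ, hγlim, ⟨hβ.1, by rw [← hset]; exact hβ.2⟩, hset⟩
end
end

section
/- Let κ be an infinite cardinal and let (λ_n)_{n<ω} be a sequence of ordinals with |λ_n| ≤ κ for all n. Then every subset L of ∏_n λ_n, ordered by the lexicographic ordering <_lex, has a weakly dense subset of cardinality at most κ. -/
open Cardinal Set

universe u v

noncomputable section

/-- `s` is a scattered subset of the linear order `L`: `ℚ` does not embed into `s`. -/
def IsScatteredSet {L : Type*} [LinearOrder L] (s : Set L) : Prop :=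
  ¬ ∃ f : ℚ → L, StrictMono f ∧ ∀ q, f q ∈ s

/-- `A` is σ-scattered: a union of countably many scattered subsets. -/
def IsSigmaScatteredSet {L : Type*} [LinearOrder L] (A : Set L) : Prop :=
  ∃ S : ℕ → Set L, (⋃ n, S n) = A ∧ ∀ n, IsScatteredSet (S n)

/-- `A` is σ-wellordered: a union of countably many subsets, each wellordered by the
ordering of `L` (i.e. every nonempty subset has a least element). -/
def IsSigmaWellOrderedSet {L : Type*} [LinearOrder L] (A : Set L) : Prop :=
  ∃ S : ℕ → Set L, (⋃ n, S n) = A ∧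
    ∀ n, ∀ T ⊆ S n, T.Nonempty → ∃ a ∈ T, ∀ b ∈ T, a ≤ b

/-- `D` is weakly dense in `A`: for all `a < c` in `A` there is `b ∈ D` with `a ≤ b ≤ c`. -/
def WeaklyDenseIn {L : Type*} [LinearOrder L] (D A : Set L) : Prop :=
  ∀ a ∈ A, ∀ c ∈ A, a < c → ∃ b ∈ D, a ≤ b ∧ b ≤ c


lemma lex_lt_iff' {x y : Lex (ℕ → Ordinal.{u})} :
    x < y ↔ ∃ i, (∀ j, j < i → ofLex x j = ofLex y j) ∧ ofLex x i < ofLex y i := Iff.rfl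

lemma sigma_card (κ : Cardinal.{u}) (hκ : ℵ₀ ≤ κ) (lam : ℕ → Ordinal.{u})
    (hlam : ∀ n, (lam n).card ≤ κ) (g : ℕ → ℕ) :
    #(Σ n : ℕ, ∀ m : Fin (g n), (Set.Iio (lam m))) ≤ Cardinal.lift.{u+1} κ := by
  have hκ' : ℵ₀ ≤ Cardinal.lift.{u+1} κ := by simpa using hκ
  rw [mk_sigma]
  have h1 : ∀ n : ℕ, #(∀ m : Fin (g n), (Set.Iio (lam m))) ≤ Cardinal.lift.{u+1} κ := by
    intro n
    rw [mk_pi]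
    calc prod (fun m : Fin (g n) => #(Set.Iio (lam m)))
        ≤ prod (fun _ : Fin (g n) => Cardinal.lift.{u+1} κ) := by
          apply prod_le_prod
          intro m
          rw [Ordinal.mk_Iio_ordinal]
          exact Cardinal.lift_le.2 (hlam m)
      _ = Cardinal.lift.{u+1} κ ^ (g n : Cardinal) := by
          rw [prod_const]
          simp
      _ ≤ Cardinal.lift.{u+1} κ := power_nat_le hκ'
  calc (sum fun n : ℕ => #(∀ m : Fin (g n), (Set.Iio (lam m))))
      ≤ sum (fun _ : ℕ => Cardinal.lift.{u+1} κ) := sum_le_sum _ _ h1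
    _ = ℵ₀ * Cardinal.lift.{u+1} κ := by simp [sum_const]
    _ = Cardinal.lift.{u+1} κ := by
        rw [Cardinal.mul_eq_right hκ' (le_trans (by norm_num) hκ') aleph0_ne_zero]

lemma exists_small_cofinal (κ : Cardinal.{u}) (hκ : ℵ₀ ≤ κ)
    (lam : ℕ → Ordinal.{u}) (hlam : ∀ n, (lam n).card ≤ κ)
    (T : Set (Lex (ℕ → Ordinal.{u}))) (hT : ∀ x ∈ T, ∀ n, ofLex x n < lam n) :
    ∃ C ⊆ T, #C ≤ Cardinal.lift.{u+1} κ ∧ ∀ a ∈ T, ∃ b ∈ C, a ≤ b := by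
  classical
  have hκ' : ℵ₀ ≤ Cardinal.lift.{u+1} κ := by simpa using hκ
  set ρ : ↥T → Cardinal.{u+1} := fun x => embeddingToCardinal x with hρdef
  have ρinj : Function.Injective ρ := fun a b h => embeddingToCardinal.injective h
  set good : ↥T → Prop := fun x =>
    ∀ y : ↥T, ρ y < ρ x → (y : Lex (ℕ → Ordinal.{u})) < (x : Lex (ℕ → Ordinal.{u})) with hgood
  refine ⟨Subtype.val '' {x : ↥T | good x}, ?_, ?_, ?_⟩
  · rintro z ⟨x, -, rfl⟩; exact x.2
  · -- cardinality
    have k1 : ∀ x y : {x : ↥T // good x},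
        (x.1 : Lex (ℕ → Ordinal.{u})) < (y.1 : Lex (ℕ → Ordinal.{u})) → ρ x.1 < ρ y.1 := by
      intro x y hxy
      rcases lt_trichotomy (ρ x.1) (ρ y.1) with h | h | h
      · exact h
      · exact absurd hxy (by rw [ρinj h]; exact lt_irrefl _)
      · exact absurd (x.2 y.1 h) (lt_asymm hxy)
    have succ_spec : ∀ x : {x : ↥T // good x},
        (∃ y : {x : ↥T // good x}, (x.1 : Lex (ℕ → Ordinal.{u})) < (y.1 : Lex _)) →
        ∃ (i : ℕ) (x' : {x : ↥T // good x}),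
          (∀ j, j < i → ofLex (x.1 : Lex (ℕ → Ordinal.{u})) j = ofLex (x'.1 : Lex (ℕ → Ordinal.{u})) j) ∧
          ofLex (x.1 : Lex (ℕ → Ordinal.{u})) i < ofLex (x'.1 : Lex (ℕ → Ordinal.{u})) i ∧
          ∀ z : {x : ↥T // good x}, (x.1 : Lex (ℕ → Ordinal.{u})) < (z.1 : Lex _) →
            (x'.1 : Lex (ℕ → Ordinal.{u})) ≤ (z.1 : Lex _) := by
      intro x hx
      set S : Set Cardinal.{u+1} :=
        (fun y : {x : ↥T // good x} => ρ y.1) ''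
          {y : {x : ↥T // good x} | (x.1 : Lex (ℕ → Ordinal.{u})) < (y.1 : Lex _)} with hSdef
      have hS : S.Nonempty := ⟨ρ hx.choose.1, hx.choose, hx.choose_spec, rfl⟩
      obtain ⟨y₀, hy₀, hy₀e⟩ := Cardinal.lt_wf.min_mem S hS
      have hmin' : ∀ z : {x : ↥T // good x}, (x.1 : Lex (ℕ → Ordinal.{u})) < (z.1 : Lex _) →
          ¬ ρ z.1 < ρ y₀.1 := by
        intro z hz hlt
        exact Cardinal.lt_wf.not_lt_min S ⟨z, hz, rfl⟩ (hy₀e ▸ hlt)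
      have hle : ∀ z : {x : ↥T // good x}, (x.1 : Lex (ℕ → Ordinal.{u})) < (z.1 : Lex _) →
          (y₀.1 : Lex (ℕ → Ordinal.{u})) ≤ (z.1 : Lex _) := by
        intro z hz
        rcases lt_trichotomy (z.1 : Lex (ℕ → Ordinal.{u})) (y₀.1 : Lex (ℕ → Ordinal.{u})) with h | h | h
        · exact absurd (k1 z y₀ h) (hmin' z hz)
        · exact h.ge
        · exact h.le
      obtain ⟨i, hpre, hi⟩ := lex_lt_iff'.1 hy₀
      exact ⟨i, y₀, hpre, hi, hle⟩
    choose i x' hpre hstep hmin using succ_spec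
    set F : {x : ↥T // good x} → (Σ n : ℕ, ∀ m : Fin (n+1), (Set.Iio (lam m))) ⊕ PUnit.{u+2} :=
      fun x => if h : ∃ y : {x : ↥T // good x}, (x.1 : Lex (ℕ → Ordinal.{u})) < (y.1 : Lex _) then
        Sum.inl ⟨i x h, fun m => ⟨ofLex (x.1 : Lex (ℕ → Ordinal.{u})) m, hT _ x.1.2 m⟩⟩
      else Sum.inr PUnit.unit with hFdef
    have main : ∀ (p q : {x : ↥T // good x})
        (hp : ∃ y : {x : ↥T // good x}, (p.1 : Lex (ℕ → Ordinal.{u})) < (y.1 : Lex _)),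
        (p.1 : Lex (ℕ → Ordinal.{u})) < (q.1 : Lex _) →
        (∀ m : ℕ, m ≤ i p hp →
          ofLex (p.1 : Lex (ℕ → Ordinal.{u})) m = ofLex (q.1 : Lex (ℕ → Ordinal.{u})) m) → False := by
      intro p q hp hlt hpre'
      have hle := hmin p hp q hlt
      have hq : (q.1 : Lex (ℕ → Ordinal.{u})) < ((x' p hp).1 : Lex _) := by
        refine lex_lt_iff'.2 ⟨i p hp, ?_, ?_⟩
        · intro j hj
          rw [← hpre' j (le_of_lt hj)]
          exact hpre p hp j hj
        · rw [← hpre' _ le_rfl]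
          exact hstep p hp
      exact absurd hle (not_le.2 hq)
    have Finj : Function.Injective F := by
      intro x z hxz
      by_cases hx : ∃ y : {x : ↥T // good x}, (x.1 : Lex (ℕ → Ordinal.{u})) < (y.1 : Lex _) <;>
        by_cases hz : ∃ y : {x : ↥T // good x}, (z.1 : Lex (ℕ → Ordinal.{u})) < (y.1 : Lex _)
      · simp only [hFdef, dif_pos hx, dif_pos hz, Sum.inl.injEq] at hxz
        have h1 : i x hx = i z hz := congrArg Sigma.fst hxz
        have h2 : ∀ m : ℕ, m ≤ i x hx →
            ofLex (x.1 : Lex (ℕ → Ordinal.{u})) m = ofLex (z.1 : Lex (ℕ → Ordinal.{u})) m := by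
          intro m hm
          have hc := congrArg (fun q : (Σ n : ℕ, ∀ k : Fin (n+1), (Set.Iio (lam k))) =>
            if h : m < q.1 + 1 then ((q.2 ⟨m, h⟩ : (Set.Iio (lam m))) : Ordinal.{u}) else 0) hxz
          simp only at hc
          rw [dif_pos (Nat.lt_succ_of_le hm), dif_pos (Nat.lt_succ_of_le (h1 ▸ hm))] at hc
          exact hc
        rcases lt_trichotomy (x.1 : Lex (ℕ → Ordinal.{u})) (z.1 : Lex (ℕ → Ordinal.{u})) with h | h | h
        · exact absurd (main x z hx h h2) (not_false)
        · exact Subtype.ext (Subtype.ext h)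
        · exact absurd (main z x hz h (fun m hm => (h2 m (h1 ▸ hm)).symm)) (not_false)
      · simp only [hFdef, dif_pos hx, dif_neg hz] at hxz
        exact (Sum.inl_ne_inr hxz).elim
      · simp only [hFdef, dif_neg hx, dif_pos hz] at hxz
        exact (Sum.inr_ne_inl hxz).elim
      · rcases lt_trichotomy (x.1 : Lex (ℕ → Ordinal.{u})) (z.1 : Lex (ℕ → Ordinal.{u})) with h | h | h
        · exact absurd ⟨z, h⟩ hx
        · exact Subtype.ext (Subtype.ext h)
        · exact absurd ⟨x, h⟩ hz
    calc #(Subtype.val '' {x : ↥T | good x}) ≤ #{x : ↥T | good x} := mk_image_le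
      _ ≤ #((Σ n : ℕ, ∀ m : Fin (n+1), (Set.Iio (lam m))) ⊕ PUnit.{u+2}) :=
          mk_le_of_injective Finj
      _ ≤ Cardinal.lift.{u+1} κ := by
          rw [mk_sum, lift_id, lift_id, mk_punit]
          have h3 := sigma_card κ hκ lam hlam (fun n => n + 1)
          calc #(Σ n : ℕ, ∀ m : Fin (n+1), (Set.Iio (lam m))) + 1
              ≤ Cardinal.lift.{u+1} κ + 1 := add_le_add_left h3 1
            _ = Cardinal.lift.{u+1} κ := by
                exact Cardinal.add_one_eq hκ'
  · intro a ha
    set S : Set Cardinal.{u+1} := ρ '' {y : ↥T | a ≤ (y : Lex (ℕ → Ordinal.{u}))} with hSdef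
    have hS : S.Nonempty := ⟨ρ ⟨a, ha⟩, ⟨a, ha⟩, Set.mem_setOf.2 le_rfl, rfl⟩
    obtain ⟨x, hx, hxe⟩ := Cardinal.lt_wf.min_mem S hS
    refine ⟨(x : Lex (ℕ → Ordinal.{u})), ⟨x, ?_, rfl⟩, hx⟩
    intro y hy
    have : ¬ a ≤ (y : Lex (ℕ → Ordinal.{u})) := by
      intro hay
      exact Cardinal.lt_wf.not_lt_min S ⟨y, hay, rfl⟩ (hxe ▸ hy)
    exact lt_of_lt_of_le (not_le.1 this) hx

/-- If `κ` is an infinite cardinal and `lam n` are ordinals of cardinality at most `κ`,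
then every subset `L` of `∏ n, lam n`, ordered lexicographically, has a weakly dense
subset of cardinality at most `κ`. -/
theorem lex_subset_has_small_weakly_dense (κ : Cardinal.{u}) (hκ : ℵ₀ ≤ κ)
    (lam : ℕ → Ordinal.{u}) (hlam : ∀ n, (lam n).card ≤ κ)
    (L : Set (Lex (ℕ → Ordinal.{u}))) (hL : ∀ x ∈ L, ∀ n, ofLex x n < lam n) :
    ∃ D ⊆ L, #D ≤ Cardinal.lift.{u + 1, u} κ ∧ WeaklyDenseIn D L := by
  classical
  have hκ' : ℵ₀ ≤ Cardinal.lift.{u+1} κ := by simpa using hκ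
  have key : ∀ t : Σ n : ℕ, ∀ m : Fin n, (Set.Iio (lam m)),
      ∃ C ⊆ {x ∈ L | ∀ m : Fin t.1, ofLex x m = (t.2 m).1}, #C ≤ Cardinal.lift.{u+1} κ ∧
        ∀ a ∈ {x ∈ L | ∀ m : Fin t.1, ofLex x m = (t.2 m).1}, ∃ b ∈ C, a ≤ b :=
    fun t => exists_small_cofinal κ hκ lam hlam _ (fun x hx => hL x hx.1)
  choose C hCsub hCcard hCcof using key
  refine ⟨⋃ t, C t, ?_, ?_, ?_⟩
  · exact Set.iUnion_subset fun t => (hCsub t).trans (Set.sep_subset _ _)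
  · calc #(⋃ t, C t) ≤ sum fun t => #(C t) := mk_iUnion_le_sum_mk
      _ ≤ sum (fun _ : (Σ n : ℕ, ∀ m : Fin n, (Set.Iio (lam m))) => Cardinal.lift.{u+1} κ) :=
          sum_le_sum _ _ hCcard
      _ = #(Σ n : ℕ, ∀ m : Fin n, (Set.Iio (lam m))) * Cardinal.lift.{u+1} κ := sum_const' _ _
      _ ≤ Cardinal.lift.{u+1} κ * Cardinal.lift.{u+1} κ :=
          mul_le_mul_left (sigma_card κ hκ lam hlam id) _
      _ = Cardinal.lift.{u+1} κ := mul_eq_self hκ'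
  · intro a ha c hc hlt
    obtain ⟨n, hprefix, hn⟩ := lex_lt_iff'.1 hlt
    set t : Σ n : ℕ, ∀ m : Fin n, (Set.Iio (lam m)) :=
      ⟨n + 1, fun m => ⟨ofLex a m, hL a ha m⟩⟩ with ht
    have haT : a ∈ {x ∈ L | ∀ m : Fin t.1, ofLex x m = (t.2 m).1} := ⟨ha, fun m => rfl⟩
    obtain ⟨b, hb, hab⟩ := hCcof t a haT
    have hbT := hCsub t hb
    refine ⟨b, Set.mem_iUnion.2 ⟨t, hb⟩, hab, le_of_lt ?_⟩
    refine lex_lt_iff'.2 ⟨n, ?_, ?_⟩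
    · intro j hj
      have h1 : ofLex b j = ofLex a j := hbT.2 ⟨j, Nat.lt_succ_of_lt hj⟩
      exact h1.trans (hprefix j hj)
    · have h1 : ofLex b n = ofLex a n := hbT.2 ⟨n, Nat.lt_succ_self n⟩
      exact h1.trans_lt hn
end
end

section
/- Let κ be a singular cardinal of cofinality ω, let (κ_n)_{n<ω} be an increasing sequence of infinite cardinals cofinal in κ, and let ρ be a function assigning to each pair α ≤ β < κ⁺ an ordinal ρ(α,β) < κ, satisfying: (1) for all ordinals ν < κ and all β < κ⁺, |{α < β : ρ(α,β) ≤ ν}| < ν⁺, where ν⁺ is the least cardinal greater than |ν|; and (2) for all α < β < γ < κ⁺, ρ(α,β) ≤ max(ρ(α,γ), ρ(β,γ)) and ρ(α,γ) ≤ max(ρ(α,β), ρ(β,γ)). Define P_ν(β) = {α < β : ρ(α,β) ≤ ν} and f_β(n) = ot(P_{κ_n}(β)). Then f_β <* f_γ for all β < γ < κ⁺; that is, the sequence (f_β)_{β<κ⁺} is increasing under eventual domination. -/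
open Cardinal Set

universe u v

noncomputable section

/-- `P_ν(β) = {α < β : ρ(α, β) ≤ ν}`. -/
def Pset (ρ : Ordinal.{u} → Ordinal.{u} → Ordinal.{u}) (ν β : Ordinal.{u}) :
    Set Ordinal.{u} :=
  {α | α < β ∧ ρ α β ≤ ν}

/-- `f_β(n) = ot(P_{κn n}(β))`, the order type of `P_{κn n}(β)`. -/
def rhoFn (ρ : Ordinal.{u} → Ordinal.{u} → Ordinal.{u}) (κn : ℕ → Cardinal.{u})
    (β : Ordinal.{u}) (n : ℕ) : Ordinal.{u + 1} :=
  otype (Pset ρ (κn n).ord β)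

/-! For `β < γ`, the inequality `ρ(α, γ) ≤ max (ρ(α, β), ρ(β, γ))` gives `P_ν(β) ⊆ P_ν(γ)` as soon
as `ρ(β, γ) ≤ ν`; then `β ∈ P_ν(γ)` lies above all of `P_ν(β)`, so the order type grows strictly.
Since `ρ(β, γ) < κ` and the `κ_n` are cofinal in `κ`, this holds for `ν = κ_n` for all large `n`. -/

theorem otype_lt_otype {s t : Set Ordinal.{u}} {β : Ordinal.{u}} (hst : s ⊆ t) (hβ : β ∈ t)
    (hsβ : ∀ x ∈ s, x < β) : otype s < otype t := by
  refine lt_of_le_of_lt ?_ (Ordinal.typein_lt_type (· < ·) (⟨β, hβ⟩ : t))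
  rw [← Ordinal.type_subrel, otype, Ordinal.type_le_iff']
  exact ⟨⟨⟨fun x => ⟨⟨x, hst x.2⟩, hsβ x x.2⟩, fun x y hxy => by
    simpa [Subtype.ext_iff] using hxy⟩, Iff.rfl⟩⟩

theorem evLT_of_eventually {f g : ℕ → Ordinal.{u}} (h : ∀ᶠ n in Filter.atTop, f n < g n) :
    EvLT f g := by
  rwa [EvLT, ← Filter.eventually_cofinite, Nat.cofinite_eq_atTop]

theorem eventually_lt_ord_of_cofinal {κ : Cardinal.{u}} {κn : ℕ → Cardinal.{u}}
    (hmono : StrictMono κn) (hcofinal : ∀ c < κ, ∃ n, c ≤ κn n) {o : Ordinal.{u}}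
    (ho : o < κ.ord) : ∀ᶠ n in Filter.atTop, o < (κn n).ord := by
  obtain ⟨m, hm⟩ := hcofinal o.card (Cardinal.lt_ord.mp ho)
  exact Filter.eventually_atTop.2
    ⟨m + 1, fun n hn => Cardinal.lt_ord.2 (hm.trans_lt (hmono (Nat.lt_of_succ_le hn)))⟩

section Pset

variable {ρ : Ordinal.{u} → Ordinal.{u} → Ordinal.{u}} {ν β γ : Ordinal.{u}}

theorem Pset_subset_Pset (htri : ∀ α < β, ρ α γ ≤ max (ρ α β) (ρ β γ)) (hβγ : β < γ)
    (hν : ρ β γ ≤ ν) : Pset ρ ν β ⊆ Pset ρ ν γ :=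
  fun α ⟨hαβ, hαν⟩ => ⟨hαβ.trans hβγ, (htri α hαβ).trans (max_le hαν hν)⟩

theorem otype_Pset_lt_otype_Pset (htri : ∀ α < β, ρ α γ ≤ max (ρ α β) (ρ β γ)) (hβγ : β < γ)
    (hν : ρ β γ ≤ ν) : otype (Pset ρ ν β) < otype (Pset ρ ν γ) :=
  otype_lt_otype (Pset_subset_Pset htri hβγ hν) ⟨hβγ, hν⟩ fun _ hα => hα.1

end Pset

theorem rhoFn_evLT_general
    (κ : Cardinal.{u})
    (κn : ℕ → Cardinal.{u}) (hmono : StrictMono κn)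
    (hcofinal : ∀ c < κ, ∃ n, c ≤ κn n)
    (ρ : Ordinal.{u} → Ordinal.{u} → Ordinal.{u})
    (hρ : ∀ α β, α ≤ β → β < (Order.succ κ).ord → ρ α β < κ.ord)
    (h2 : ∀ α β γ, α < β → β < γ → γ < (Order.succ κ).ord →
      ρ α β ≤ max (ρ α γ) (ρ β γ) ∧ ρ α γ ≤ max (ρ α β) (ρ β γ))
    :
    ∀ β γ, β < γ → γ < (Order.succ κ).ord → EvLT (rhoFn ρ κn β) (rhoFn ρ κn γ) := by
  intro β γ hβγ hγ
  have htri : ∀ α < β, ρ α γ ≤ max (ρ α β) (ρ β γ) := fun α hαβ => (h2 α β γ hαβ hβγ hγ).2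
  have hργ : ∀ᶠ n in Filter.atTop, ρ β γ < (κn n).ord :=
    eventually_lt_ord_of_cofinal hmono hcofinal (hρ β γ hβγ.le hγ)
  exact evLT_of_eventually <| hργ.mono fun n hn => otype_Pset_lt_otype_Pset htri hβγ hn.le

/-- Properties (1) and (2) of a `ρ`-function imply that the sequence
`f β n = ot(P_{κn n}(β))` is increasing under eventual domination. -/
theorem rhoFn_evLT
    (κ : Cardinal.{u}) (hκ : ℵ₀ < κ) (hcof : κ.ord.cof = ℵ₀)
    (κn : ℕ → Cardinal.{u}) (hinf : ∀ n, ℵ₀ ≤ κn n) (hmono : StrictMono κn)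
    (hlt : ∀ n, κn n < κ) (hcofinal : ∀ c < κ, ∃ n, c ≤ κn n)
    (ρ : Ordinal.{u} → Ordinal.{u} → Ordinal.{u})
    (hρ : ∀ α β, α ≤ β → β < (Order.succ κ).ord → ρ α β < κ.ord)
    (h1 : ∀ ν < κ.ord, ∀ β < (Order.succ κ).ord,
      #(Pset ρ ν β) < Cardinal.lift.{u + 1, u} (Order.succ ν.card))
    (h2 : ∀ α β γ, α < β → β < γ → γ < (Order.succ κ).ord →
      ρ α β ≤ max (ρ α γ) (ρ β γ) ∧ ρ α γ ≤ max (ρ α β) (ρ β γ))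
    :
    ∀ β γ, β < γ → γ < (Order.succ κ).ord → EvLT (rhoFn ρ κn β) (rhoFn ρ κn γ) :=
  rhoFn_evLT_general κ κn hmono hcofinal ρ hρ h2
end
end

section
/- Let κ be a singular cardinal of cofinality ω, let (κ_n)_{n<ω} be an increasing sequence of infinite cardinals cofinal in κ, and let ρ be a function assigning to each pair α ≤ β < κ⁺ an ordinal ρ(α,β) < κ, satisfying: (1) for all ordinals ν < κ and all β < κ⁺, |{α < β : ρ(α,β) ≤ ν}| < ν⁺, where ν⁺ is the least cardinal greater than |ν|; and (2) for all α < β < γ < κ⁺, ρ(α,β) ≤ max(ρ(α,γ), ρ(β,γ)) and ρ(α,γ) ≤ max(ρ(α,β), ρ(β,γ)). Define P_ν(β) = {α < β : ρ(α,β) ≤ ν} and f_β(n) = ot(P_{κ_n}(β)). Then every γ < κ⁺ of uncountable cofinality is a good point of (f_β)_{β<κ⁺}: there exist an unbounded A ⊆ γ and m < ω such that (f_ξ(n))_{ξ∈A} is strictly increasing for all n ≥ m. -/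
/-! Since `ρ(α, γ) < κ` for every `α < γ`, the countably many sets `P_{κ_n}(γ)` cover `γ`;
as `cf γ > ω`, one of them, `P_{κ_m}(γ)`, is unbounded in `γ`, and it is the required `A`.
Indeed, for `ξ < η` in `P_{κ_n}(γ)` with `n ≥ m`, the two triangle inequalities for `ρ` give
`ξ ∈ P_{κ_n}(η)` and `P_{κ_n}(ξ) ⊆ P_{κ_n}(η)`, so `ot P_{κ_n}(ξ) < ot P_{κ_n}(η)`. -/

open Cardinal Set

universe u v

noncomputable section

theorem otype_lt_otype_s18 {S T : Set Ordinal.{u}} (h : S ⊆ T) {t : Ordinal.{u}} (ht : t ∈ T)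
    (hS : ∀ s ∈ S, s < t) : otype S < otype T := by
  let f : ((· < ·) : S → S → Prop) ↪r Subrel (· < ·) (· < (⟨t, ht⟩ : T)) :=
    RelEmbedding.ofMonotone (fun s => ⟨⟨s, h s.2⟩, hS s s.2⟩) fun _ _ hab => hab
  exact f.ordinal_type_le.trans_lt (PrincipalSeg.ofElement _ _).ordinal_type_lt

theorem exists_unbounded_of_forall_exists_mem {γ : Ordinal.{u}} (hγ : ℵ₀ < γ.cof)
    (S : ℕ → Set Ordinal.{u}) (hS : ∀ α < γ, ∃ n, α ∈ S n) :
    ∃ m, ∀ β < γ, ∃ ξ ∈ S m, β ≤ ξ := by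
  by_contra! hbdd
  choose b hbγ hb using hbdd
  have hsup : ⨆ n, b n < γ :=
    Ordinal.lift_iSup_lt_of_lt_cof (by simpa using hγ) hbγ
  obtain ⟨n, hn⟩ := hS _ hsup
  exact (hb n _ hn).not_ge (Ordinal.le_iSup b n)

theorem exists_le_ord_of_lt_ord {κ : Cardinal.{u}} {κn : ℕ → Cardinal.{u}}
    (hmono : StrictMono κn) (hcofinal : ∀ c < κ, ∃ n, c ≤ κn n)
    {o : Ordinal.{u}} (ho : o < κ.ord) :
    ∃ n, o ≤ (κn n).ord := by
  obtain ⟨n, hn⟩ := hcofinal _ (lt_ord.1 ho)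
  -- `o.card ≤ κn n` only gives `o < (succ (κn n)).ord`, hence the step to `n + 1`.
  exact ⟨n + 1, (lt_ord.2 (hn.trans_lt (hmono n.lt_succ_self))).le⟩

section Pset

variable {ρ : Ordinal.{u} → Ordinal.{u} → Ordinal.{u}} {θ ν ν' ξ η γ : Ordinal.{u}}

theorem Pset_mono (h : ν ≤ ν') : Pset ρ ν γ ⊆ Pset ρ ν' γ :=
  fun _ hα => ⟨hα.1, hα.2.trans h⟩

theorem mem_Pset_of_mem_Pset
    (h : ∀ α β γ, α < β → β < γ → γ < θ → ρ α β ≤ max (ρ α γ) (ρ β γ))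
    (hγ : γ < θ) (hξη : ξ < η) (hξ : ξ ∈ Pset ρ ν γ) (hη : η ∈ Pset ρ ν γ) :
    ξ ∈ Pset ρ ν η :=
  ⟨hξη, (h ξ η γ hξη hη.1 hγ).trans (max_le hξ.2 hη.2)⟩

theorem Pset_subset_Pset_of_mem
    (h : ∀ α β γ, α < β → β < γ → γ < θ → ρ α γ ≤ max (ρ α β) (ρ β γ))
    (hη : η < θ) (hξ : ξ ∈ Pset ρ ν η) : Pset ρ ν ξ ⊆ Pset ρ ν η :=
  fun α hα => ⟨hα.1.trans hξ.1, (h α ξ η hα.1 hξ.1 hη).trans (max_le hα.2 hξ.2)⟩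

theorem strictMonoOn_otype_Pset
    (h : ∀ α β γ, α < β → β < γ → γ < θ →
      ρ α β ≤ max (ρ α γ) (ρ β γ) ∧ ρ α γ ≤ max (ρ α β) (ρ β γ))
    (hγ : γ < θ) : StrictMonoOn (fun ξ => otype (Pset ρ ν ξ)) (Pset ρ ν γ) := by
  intro ξ hξ η hη hξη
  have hξη' : ξ ∈ Pset ρ ν η :=
    mem_Pset_of_mem_Pset (fun α β γ h₁ h₂ h₃ => (h α β γ h₁ h₂ h₃).1) hγ hξη hξ hη
  exact otype_lt_otype_s18
    (Pset_subset_Pset_of_mem (fun α β γ h₁ h₂ h₃ => (h α β γ h₁ h₂ h₃).2) (hη.1.trans hγ) hξη')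
    hξη' fun _ hα => hα.1

end Pset

theorem rhoFn_goodPt_general
    (κ : Cardinal.{u})
    (κn : ℕ → Cardinal.{u}) (hmono : StrictMono κn)
    (hcofinal : ∀ c < κ, ∃ n, c ≤ κn n)
    (ρ : Ordinal.{u} → Ordinal.{u} → Ordinal.{u})
    (hρ : ∀ α β, α ≤ β → β < (Order.succ κ).ord → ρ α β < κ.ord)
    (h2 : ∀ α β γ, α < β → β < γ → γ < (Order.succ κ).ord →
      ρ α β ≤ max (ρ α γ) (ρ β γ) ∧ ρ α γ ≤ max (ρ α β) (ρ β γ))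
    :
    ∀ γ < (Order.succ κ).ord, ℵ₀ < γ.cof → IsGoodPt (rhoFn ρ κn) γ := by
  intro γ hγ hcofγ
  have hcover : ∀ α < γ, ∃ n, α ∈ Pset ρ (κn n).ord γ := fun α hα =>
    (exists_le_ord_of_lt_ord hmono hcofinal (hρ α γ hα.le hγ)).imp fun _ h => ⟨hα, h⟩
  obtain ⟨m, hm⟩ := exists_unbounded_of_forall_exists_mem hcofγ _ hcover
  refine ⟨Pset ρ (κn m).ord γ, fun ξ hξ => hξ.1, hm, m, fun n hn => ?_⟩
  exact (strictMonoOn_otype_Pset h2 hγ).mono (Pset_mono (ord_le_ord.2 (hmono.monotone hn)))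

/-- Properties (1) and (2) of a `ρ`-function imply that every `γ < κ⁺` of uncountable
cofinality is a good point of `f β n = ot(P_{κn n}(β))`: there are an unbounded `A ⊆ γ`
and `m < ω` such that `ξ ↦ f ξ n` is strictly increasing on `A` for all `n ≥ m`. -/
theorem rhoFn_goodPt
    (κ : Cardinal.{u}) (hκ : ℵ₀ < κ) (hcof : κ.ord.cof = ℵ₀)
    (κn : ℕ → Cardinal.{u}) (hinf : ∀ n, ℵ₀ ≤ κn n) (hmono : StrictMono κn)
    (hlt : ∀ n, κn n < κ) (hcofinal : ∀ c < κ, ∃ n, c ≤ κn n)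
    (ρ : Ordinal.{u} → Ordinal.{u} → Ordinal.{u})
    (hρ : ∀ α β, α ≤ β → β < (Order.succ κ).ord → ρ α β < κ.ord)
    (h1 : ∀ ν < κ.ord, ∀ β < (Order.succ κ).ord,
      #(Pset ρ ν β) < Cardinal.lift.{u + 1, u} (Order.succ ν.card))
    (h2 : ∀ α β γ, α < β → β < γ → γ < (Order.succ κ).ord →
      ρ α β ≤ max (ρ α γ) (ρ β γ) ∧ ρ α γ ≤ max (ρ α β) (ρ β γ))
    :
    ∀ γ < (Order.succ κ).ord, ℵ₀ < γ.cof → IsGoodPt (rhoFn ρ κn) γ :=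
  rhoFn_goodPt_general κ κn hmono hcofinal ρ hρ h2
end
end

section
/- Let κ be a singular cardinal of cofinality ω, let (κ_n)_{n<ω} be an increasing sequence of infinite cardinals cofinal in κ, and let ρ be a function assigning to each pair α ≤ β < κ⁺ an ordinal ρ(α,β) < κ, satisfying: (1) for all ordinals ν < κ and all β < κ⁺, |{α < β : ρ(α,β) ≤ ν}| < ν⁺, where ν⁺ is the least cardinal greater than |ν|; (2) for all α < β < γ < κ⁺, ρ(α,β) ≤ max(ρ(α,γ), ρ(β,γ)) and ρ(α,γ) ≤ max(ρ(α,β), ρ(β,γ)); and (3) for all ordinals ν < κ and all β < κ⁺, the set {α < β : ρ(α,β) ≤ ν} is closed in β. Define P_ν(β) = {α < β : ρ(α,β) ≤ ν} and f_β(n) = ot(P_{κ_n}(β)). Then every γ < κ⁺ of uncountable cofinality is a very good point of (f_β)_{β<κ⁺}: there exist a club C ⊆ γ and m < ω such that (f_ξ(n))_{ξ∈C} is strictly increasing for all n ≥ m. -/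
open Cardinal Set

universe u v

noncomputable section

section Aux

theorem otype_le_of_subset {X Y : Set Ordinal.{u}} (h : X ⊆ Y) : otype X ≤ otype Y := by
  refine RelEmbedding.ordinal_type_le ⟨⟨Set.inclusion h, Set.inclusion_injective h⟩, ?_⟩
  intro a b
  simp [Set.inclusion, Subtype.mk_lt_mk]

theorem otype_lt_of_subset {X Y : Set Ordinal.{u}} (hXY : X ⊆ Y) {ξ : Ordinal.{u}}
    (hξ : ξ ∈ Y) (hb : ∀ x ∈ X, x < ξ) : otype X < otype Y := by
  have h1 : otype X ≤ otype (Y ∩ Set.Iio ξ) :=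
    otype_le_of_subset (fun x hx => ⟨hXY hx, hb x hx⟩)
  refine h1.trans_lt (PrincipalSeg.ordinal_type_lt
    (⟨⟨⟨fun x => ⟨x.1, x.2.1⟩, ?_⟩, ?_⟩, ⟨ξ, hξ⟩, ?_⟩ :
      PrincipalSeg ((· < ·) : (Y ∩ Set.Iio ξ : Set Ordinal) → _ → Prop)
        ((· < ·) : Y → Y → Prop)))
  · intro a b hab
    simpa [Subtype.ext_iff] using hab
  · intro a b
    exact Iff.rfl
  · intro b
    constructor
    · rintro ⟨a, rfl⟩
      exact a.2.2
    · intro hb'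
      exact ⟨⟨b.1, b.2, hb'⟩, rfl⟩

end Aux

/-- Properties (1), (2) and (3) of a `ρ`-function imply that every `γ < κ⁺` of
uncountable cofinality is a very good point of `f β n = ot(P_{κn n}(β))`: there are a
club `C ⊆ γ` and `m < ω` such that `ξ ↦ f ξ n` is strictly increasing on `C` for all
`n ≥ m`. -/
theorem rhoFn_veryGoodPt
    (κ : Cardinal.{u}) (hκ : ℵ₀ < κ) (hcof : κ.ord.cof = ℵ₀)
    (κn : ℕ → Cardinal.{u}) (hinf : ∀ n, ℵ₀ ≤ κn n) (hmono : StrictMono κn)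
    (hlt : ∀ n, κn n < κ) (hcofinal : ∀ c < κ, ∃ n, c ≤ κn n)
    (ρ : Ordinal.{u} → Ordinal.{u} → Ordinal.{u})
    (hρ : ∀ α β, α ≤ β → β < (Order.succ κ).ord → ρ α β < κ.ord)
    (h1 : ∀ ν < κ.ord, ∀ β < (Order.succ κ).ord,
      #(Pset ρ ν β) < Cardinal.lift.{u + 1, u} (Order.succ ν.card))
    (h2 : ∀ α β γ, α < β → β < γ → γ < (Order.succ κ).ord →
      ρ α β ≤ max (ρ α γ) (ρ β γ) ∧ ρ α γ ≤ max (ρ α β) (ρ β γ))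
    (h3 : ∀ ν < κ.ord, ∀ β < (Order.succ κ).ord,
      ∀ Y ⊆ Pset ρ ν β, Y.Nonempty → sSup Y < β → sSup Y ∈ Pset ρ ν β)
    :
    ∀ γ < (Order.succ κ).ord, ℵ₀ < γ.cof → IsVeryGoodPt (rhoFn ρ κn) γ := by
  intro γ hγ hcfγ
  -- every α < γ lies in some `Pset ρ (κn n).ord γ`
  have hmem : ∀ α < γ, ∃ n : ℕ, ρ α γ ≤ (κn n).ord := by
    intro α hα
    have h := hρ α γ hα.le hγ
    have hc : (ρ α γ).card < κ := Cardinal.lt_ord.mp h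
    obtain ⟨n, hn⟩ := hcofinal _ hc
    exact ⟨n + 1, le_of_lt (Cardinal.lt_ord.mpr (hn.trans_lt (hmono (Nat.lt_succ_self n))))⟩
  -- find `m` with `Pset ρ (κn m).ord γ` unbounded in γ
  have hub : ∃ m : ℕ, ∀ β < γ, ∃ ξ ∈ Pset ρ (κn m).ord γ, β ≤ ξ := by
    by_contra h
    push_neg at h
    choose b hb1 hb2 using h
    have hlim : Order.IsSuccLimit γ := Ordinal.aleph0_le_cof.mp hcfγ.le
    have hsup : (⨆ n : ℕ, b n + 1) < γ := by
      apply Ordinal.iSup_lt_ord_lift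
      · simpa using hcfγ
      · intro n
        rw [Ordinal.add_one_eq_succ]
        exact hlim.succ_lt (hb1 n)
    obtain ⟨n, hn⟩ := hmem _ hsup
    have hmem' : (⨆ n : ℕ, b n + 1) ∈ Pset ρ (κn n).ord γ := ⟨hsup, hn⟩
    have hle : b n ≤ ⨆ n : ℕ, b n + 1 :=
      le_trans (le_self_add) (Ordinal.le_iSup (fun n => b n + 1) n)
    exact absurd (hb2 n _ hmem') (not_lt.mpr hle)
  obtain ⟨m, hm⟩ := hub
  refine ⟨Pset ρ (κn m).ord γ, ⟨fun β hβ => hβ.1, hm, ?_⟩, m, ?_⟩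
  · exact h3 (κn m).ord (Cardinal.ord_lt_ord.mpr (hlt m)) γ hγ
  · intro n hn ξ hξ ζ hζ hlt'
    have hκmn : (κn m).ord ≤ (κn n).ord := Cardinal.ord_le_ord.mpr (hmono.monotone hn)
    have hζγ : ζ < γ := hζ.1
    have hζκ : ζ < (Order.succ κ).ord := hζγ.trans hγ
    have hξζP : ξ ∈ Pset ρ (κn n).ord ζ := by
      refine ⟨hlt', ?_⟩
      exact le_trans (h2 ξ ζ γ hlt' hζγ hγ).1
        (max_le (hξ.2.trans hκmn) (hζ.2.trans hκmn))
    have hsub : Pset ρ (κn n).ord ξ ⊆ Pset ρ (κn n).ord ζ := by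
      rintro α ⟨hαξ, hαρ⟩
      exact ⟨hαξ.trans hlt', le_trans (h2 α ξ ζ hαξ hlt' hζκ).2 (max_le hαρ hξζP.2)⟩
    exact otype_lt_of_subset hsub hξζP (fun x hx => hx.1)
end
end
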